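/- arXiv:2007.01463 — 7 statements merged into one kernel-verified Lean document; each statement's English description precedes it below -/
import Mathlib

section
/- Let ρ > 0 and k ∈ [0,1]. Define π(0,0) = 2/(k²ρ² + 2kρ² + 2kρ + ρ² + 2ρ + 2), and with D = 2k²ρ² + 4kρ² + 6kρ + 2ρ² + 6ρ + 4 set π(1,0) = ρ(k²ρ² + 2kρ² + 6kρ + ρ² + 4ρ + 4)/D · π(0,0), π(0,1) = ρ²(ρk² + 2ρk + ρ + 2)/D · π(0,0), π(0,2) = kρ(k²ρ² + 2kρ² + 4kρ + ρ² + 6ρ + 4)/D · π(0,0), π(2,0) = kρ²(2k + ρ + 2kρ + k²ρ)/D · π(0,0), π(1,1) = (ρ²/2)π(0,0), π(1,2) = kρ²(ρ + kρ + 4)/(2ρ + 2kρ + 4) · π(0,0), π(2,1) = kρ³(k + 1)/(2ρ + 2kρ + 4) · π(0,0), π(2,2) = (k²ρ²/2)π(0,0). Then all π(i,j) are nonnegative, they sum to 1, and they satisfy the full flexibility balance equations with γ = 1; i.e., π is the stationary distribution of the full flexibility system with identical service times. -/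
/-- The balance equations of the full flexibility system with parameters `ρ`, `k`, `γ`. -/
def FullBalance (ρ k γ : ℝ) (π : Fin 3 → Fin 3 → ℝ) : Prop :=
  (ρ + k*ρ) * π 0 0 = π 1 0 + γ * π 0 1 + π 0 2 + γ * π 2 0 ∧
  (ρ + k*ρ + 1) * π 1 0 = ρ * π 0 0 + γ * π 1 1 + π 1 2 ∧
  (ρ + k*ρ + γ) * π 2 0 = γ * π 2 1 + π 2 2 ∧
  (ρ + k*ρ + γ) * π 0 1 = π 1 1 + γ * π 2 1 ∧
  (1 + γ) * π 1 1 = ρ * π 1 0 + ρ * π 0 1 ∧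
  2 * γ * π 2 1 = ρ * π 2 0 + k*ρ * π 0 1 ∧
  (ρ + k*ρ + 1) * π 0 2 = k*ρ * π 0 0 + π 1 2 + γ * π 2 2 ∧
  2 * π 1 2 = ρ * π 0 2 + k*ρ * π 1 0 ∧
  (γ + 1) * π 2 2 = k*ρ * π 2 0 + k*ρ * π 0 2

/-- `π` is a stationary distribution of the full flexibility system. -/
def FullStationary (ρ k γ : ℝ) (π : Fin 3 → Fin 3 → ℝ) : Prop :=
  (∀ i j, 0 ≤ π i j) ∧ (∑ i : Fin 3, ∑ j : Fin 3, π i j) = 1 ∧ FullBalance ρ k γ π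

/-- Throughput of the full flexibility system. -/
noncomputable def Tfs (ρ k : ℝ) (π : Fin 3 → Fin 3 → ℝ) : ℝ :=
  (k + 1) * ρ * (1 - π 1 1 - π 1 2 - π 2 1 - π 2 2)

set_option maxHeartbeats 2000000 in
/-- the given family `π` is the stationary distribution of the full
flexibility system with identical service times (`γ = 1`). -/
theorem stmt_0 (ρ k : ℝ) (hρ : 0 < ρ) (hk : k ∈ Set.Icc (0:ℝ) 1) :
    FullStationary ρ k 1
      (![![2/(k^2*ρ^2 + 2*k*ρ^2 + 2*k*ρ + ρ^2 + 2*ρ + 2),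
          ρ^2*(ρ*k^2 + 2*ρ*k + ρ + 2)/(2*k^2*ρ^2 + 4*k*ρ^2 + 6*k*ρ + 2*ρ^2 + 6*ρ + 4) *
            (2/(k^2*ρ^2 + 2*k*ρ^2 + 2*k*ρ + ρ^2 + 2*ρ + 2)),
          k*ρ*(k^2*ρ^2 + 2*k*ρ^2 + 4*k*ρ + ρ^2 + 6*ρ + 4)/(2*k^2*ρ^2 + 4*k*ρ^2 + 6*k*ρ + 2*ρ^2 + 6*ρ + 4) *
            (2/(k^2*ρ^2 + 2*k*ρ^2 + 2*k*ρ + ρ^2 + 2*ρ + 2))],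
        ![ρ*(k^2*ρ^2 + 2*k*ρ^2 + 6*k*ρ + ρ^2 + 4*ρ + 4)/(2*k^2*ρ^2 + 4*k*ρ^2 + 6*k*ρ + 2*ρ^2 + 6*ρ + 4) *
            (2/(k^2*ρ^2 + 2*k*ρ^2 + 2*k*ρ + ρ^2 + 2*ρ + 2)),
          ρ^2/2 * (2/(k^2*ρ^2 + 2*k*ρ^2 + 2*k*ρ + ρ^2 + 2*ρ + 2)),
          k*ρ^2*(ρ + k*ρ + 4)/(2*ρ + 2*k*ρ + 4) *
            (2/(k^2*ρ^2 + 2*k*ρ^2 + 2*k*ρ + ρ^2 + 2*ρ + 2))],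
        ![k*ρ^2*(2*k + ρ + 2*k*ρ + k^2*ρ)/(2*k^2*ρ^2 + 4*k*ρ^2 + 6*k*ρ + 2*ρ^2 + 6*ρ + 4) *
            (2/(k^2*ρ^2 + 2*k*ρ^2 + 2*k*ρ + ρ^2 + 2*ρ + 2)),
          k*ρ^3*(k + 1)/(2*ρ + 2*k*ρ + 4) *
            (2/(k^2*ρ^2 + 2*k*ρ^2 + 2*k*ρ + ρ^2 + 2*ρ + 2)),
          k^2*ρ^2/2 * (2/(k^2*ρ^2 + 2*k*ρ^2 + 2*k*ρ + ρ^2 + 2*ρ + 2))]]) := by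
  obtain ⟨hk0, hk1⟩ := hk
  have hd1 : (0:ℝ) < k^2*ρ^2 + 2*k*ρ^2 + 2*k*ρ + ρ^2 + 2*ρ + 2 := by positivity
  have hd2 : (0:ℝ) < 2*k^2*ρ^2 + 4*k*ρ^2 + 6*k*ρ + 2*ρ^2 + 6*ρ + 4 := by positivity
  have hd3 : (0:ℝ) < 2*ρ + 2*k*ρ + 4 := by positivity
  refine ⟨?_, ?_, ?_⟩
  · intro i j
    fin_cases i <;> fin_cases j <;> simp <;> positivity
  · simp only [Fin.sum_univ_three, Matrix.cons_val', Matrix.cons_val_zero, Matrix.cons_val_one,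
      Matrix.head_cons, Matrix.empty_val', Matrix.cons_val_fin_one, Matrix.head_fin_const,
      Matrix.cons_val_two, Matrix.tail_cons]
    field_simp
    ring
  · refine ⟨?_,?_,?_,?_,?_,?_,?_,?_,?_⟩ <;>
      simp only [Matrix.cons_val', Matrix.cons_val_zero, Matrix.cons_val_one, Matrix.head_cons,
        Matrix.empty_val', Matrix.cons_val_fin_one, Matrix.head_fin_const, Matrix.cons_val_two,
        Matrix.tail_cons] <;>
      field_simp <;> ring
end

section
/- Let ρ > 0 and k ∈ (0,1]. Then with identical service times (γ = 1) the throughputs satisfy the strict ordering T_is^{γ=1} < T_ps^{γ=1} < T_fs^{γ=1}, i.e., (2kρ² + (k+1)ρ)/((ρ+1)(kρ+1)) < ρ(2k²ρ² + k²ρ + 4kρ² + 7kρ + 2k + 2ρ² + 4ρ + 2)/((ρ+1)(k²ρ² + 2kρ² + 3kρ + ρ² + 2ρ + 2)) < 2ρ(k+1)(ρ + kρ + 1)/(k²ρ² + 2kρ² + 2kρ + ρ² + 2ρ + 2). -/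
/-- with identical service times (`γ = 1`), the throughputs satisfy
`T_is < T_ps < T_fs`. -/
theorem stmt_2 (ρ k : ℝ) (hρ : 0 < ρ) (hk : k ∈ Set.Ioc (0:ℝ) 1) :
    (2*k*ρ^2 + (k + 1)*ρ)/((ρ + 1)*(k*ρ + 1)) <
      ρ*(2*k^2*ρ^2 + k^2*ρ + 4*k*ρ^2 + 7*k*ρ + 2*k + 2*ρ^2 + 4*ρ + 2) /
        ((ρ + 1)*(k^2*ρ^2 + 2*k*ρ^2 + 3*k*ρ + ρ^2 + 2*ρ + 2)) ∧
    ρ*(2*k^2*ρ^2 + k^2*ρ + 4*k*ρ^2 + 7*k*ρ + 2*k + 2*ρ^2 + 4*ρ + 2) /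
        ((ρ + 1)*(k^2*ρ^2 + 2*k*ρ^2 + 3*k*ρ + ρ^2 + 2*ρ + 2)) <
      2*ρ*(k + 1)*(ρ + k*ρ + 1)/(k^2*ρ^2 + 2*k*ρ^2 + 2*k*ρ + ρ^2 + 2*ρ + 2) := by
  obtain ⟨hk0, hk1⟩ := hk
  have hb : (0:ℝ) < (ρ + 1)*(k*ρ + 1) := by positivity
  have hd : (0:ℝ) < (ρ + 1)*(k^2*ρ^2 + 2*k*ρ^2 + 3*k*ρ + ρ^2 + 2*ρ + 2) := by positivity
  have hf : (0:ℝ) < k^2*ρ^2 + 2*k*ρ^2 + 2*k*ρ + ρ^2 + 2*ρ + 2 := by positivity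
  constructor
  · rw [div_lt_div_iff₀ hb hd]
    nlinarith [mul_pos hρ hρ, mul_pos (mul_pos hρ hρ) hρ,
      mul_pos (mul_pos (mul_pos hρ hρ) hρ) hρ, mul_pos hk0 hρ,
      mul_pos (mul_pos hk0 hρ) (mul_pos hρ hρ),
      mul_pos (mul_pos hk0 hρ) (mul_pos (mul_pos hρ hρ) hρ)]
  · rw [div_lt_div_iff₀ hd hf]
    nlinarith [mul_pos hk0 hρ, mul_pos hk0 hk0, mul_pos hρ hρ,
      mul_pos (mul_pos hk0 hρ) (mul_pos hk0 hρ),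
      mul_pos (mul_pos hk0 hρ) (mul_pos hρ hρ),
      mul_pos (mul_pos (mul_pos hk0 hρ) (mul_pos hk0 hρ)) (mul_pos hρ hρ),
      mul_pos (mul_pos (mul_pos hk0 hρ) (mul_pos hk0 hρ)) (mul_pos hk0 hρ),
      mul_pos (mul_pos (mul_pos hk0 hρ) (mul_pos hk0 hρ)) (mul_pos (mul_pos hk0 hρ) (mul_pos hk0 hρ))]
end

section
/- Let ρ > 0, k ∈ [0,1] and γ = 0. Then: (i) the family π with π(2,1) = 1 and π(i,j) = 0 for all other states is a stationary distribution of the full flexibility system (it is nonnegative, sums to 1, and satisfies the full flexibility balance equations with γ = 0), and its throughput is T_fs(π) = 0; (ii) the family p with p(0,1) = 1/(ρ+1), p(1,1) = ρ/(ρ+1), and p(m,n) = 0 for all other states is a stationary distribution of the partial flexibility system (it is nonnegative, sums to 1, and satisfies the partial flexibility balance equations with γ = 0), and its throughput is T_ps(p) = ρ/(ρ+1); (iii) consequently T_fs(π) < T_ps(p) ≤ T_is, with T_ps(p) = T_is if and only if k = 0. -/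
/-- The balance equations of the partial flexibility system with parameters `ρ`, `k`, `γ`. -/
def PartialBalance (ρ k γ : ℝ) (p : Fin 2 → Fin 3 → ℝ) : Prop :=
  (ρ + k*ρ) * p 0 0 = p 1 0 + γ * p 0 1 + p 0 2 ∧
  (ρ + k*ρ + 1) * p 1 0 = ρ * p 0 0 + γ * p 1 1 + p 1 2 ∧
  2 * p 1 2 = ρ * p 0 2 + k*ρ * p 1 0 ∧
  (ρ + 1) * p 0 2 = k*ρ * p 0 0 + p 1 2 ∧
  (1 + γ) * p 1 1 = ρ * (p 0 1 + p 1 0) ∧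
  (ρ + γ) * p 0 1 = p 1 1

/-- `p` is a stationary distribution of the partial flexibility system. -/
def PartialStationary (ρ k γ : ℝ) (p : Fin 2 → Fin 3 → ℝ) : Prop :=
  (∀ m n, 0 ≤ p m n) ∧ (∑ m : Fin 2, ∑ n : Fin 3, p m n) = 1 ∧ PartialBalance ρ k γ p

/-- Throughput of the partial flexibility system. -/
noncomputable def Tps (ρ k : ℝ) (p : Fin 2 → Fin 3 → ℝ) : ℝ :=
  ρ * (1 - p 1 1 - p 1 2) + k*ρ * (1 - p 1 1 - p 1 2 - p 0 1 - p 0 2)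

/-- Throughput of the independent system. -/
noncomputable def Tis (ρ k : ℝ) : ℝ := ρ/(ρ+1) + k*ρ/(k*ρ+1)

/-!
With `γ = 0` a customer served by the non-dedicated server never leaves. In the full flexibility
system the state `(2,1)`, where both servers hold customers of the other type, is therefore
absorbing, and nothing is ever served again. In the partial flexibility system Server 2 is
eventually blocked for good by a Type-1 customer; from then on every Type-2 customer is lost and
Server 1 is an Erlang loss server with load `ρ`, of throughput `ρ/(ρ+1)`. The independent system
serves in addition the Type-2 stream with throughput `kρ/(kρ+1)`, which is positive iff `k > 0`.
-/

theorem fullStationary_zero_absorbing (ρ k : ℝ) :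
    FullStationary ρ k 0 ![![0, 0, 0], ![0, 0, 0], ![0, 1, 0]] := by
  refine ⟨fun i j => ?_, ?_, ?_⟩
  · fin_cases i <;> fin_cases j <;> norm_num
  · simp [Fin.sum_univ_succ]
  · simp [FullBalance]

theorem tfs_zero_absorbing (ρ k : ℝ) : Tfs ρ k ![![0, 0, 0], ![0, 0, 0], ![0, 1, 0]] = 0 := by
  simp [Tfs]

theorem partialStationary_zero_blocked {ρ : ℝ} (k : ℝ) (hρ : 0 ≤ ρ) :
    PartialStationary ρ k 0 ![![0, 1/(ρ+1), 0], ![0, ρ/(ρ+1), 0]] := by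
  have hρ1 : ρ + 1 ≠ 0 := by positivity
  refine ⟨fun m n => ?_, ?_, ?_⟩
  · fin_cases m <;> fin_cases n <;> simp [hρ, add_nonneg, div_nonneg]
  · rw [Fin.sum_univ_two, Fin.sum_univ_three, Fin.sum_univ_three]
    change 0 + 1/(ρ+1) + 0 + (0 + ρ/(ρ+1) + 0) = 1
    field_simp
    ring
  · simp [PartialBalance, div_eq_mul_inv]

theorem tps_zero_blocked {ρ : ℝ} (k : ℝ) (hρ : ρ + 1 ≠ 0) :
    Tps ρ k ![![0, 1/(ρ+1), 0], ![0, ρ/(ρ+1), 0]] = ρ/(ρ+1) := by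
  change ρ * (1 - ρ/(ρ+1) - 0) + k*ρ * (1 - ρ/(ρ+1) - 0 - 1/(ρ+1) - 0) = ρ/(ρ+1)
  field_simp
  ring

theorem div_add_one_le_tis {ρ k : ℝ} (hρ : 0 ≤ ρ) (hk : 0 ≤ k) : ρ/(ρ+1) ≤ Tis ρ k := by
  rw [Tis, le_add_iff_nonneg_right]
  positivity

theorem div_add_one_eq_tis_iff {ρ k : ℝ} (hρ : 0 < ρ) (hk : 0 ≤ k) :
    ρ/(ρ+1) = Tis ρ k ↔ k = 0 := by
  have hkρ : k*ρ + 1 ≠ 0 := by positivity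
  rw [Tis, left_eq_add, div_eq_zero_iff, or_iff_left hkρ, mul_eq_zero, or_iff_left hρ.ne']

/-- when `γ = 0`, the indicated families are stationary distributions of the
full and partial flexibility systems, with throughputs `0` and `ρ/(ρ+1)` respectively, and
`T_fs < T_ps ≤ T_is` with equality iff `k = 0`. -/
theorem stmt_3 (ρ k : ℝ) (hρ : 0 < ρ) (hk : k ∈ Set.Icc (0:ℝ) 1) :
    FullStationary ρ k 0 ![![0, 0, 0], ![0, 0, 0], ![0, 1, 0]] ∧
    Tfs ρ k ![![0, 0, 0], ![0, 0, 0], ![0, 1, 0]] = 0 ∧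
    PartialStationary ρ k 0 ![![0, 1/(ρ+1), 0], ![0, ρ/(ρ+1), 0]] ∧
    Tps ρ k ![![0, 1/(ρ+1), 0], ![0, ρ/(ρ+1), 0]] = ρ/(ρ+1) ∧
    Tfs ρ k ![![0, 0, 0], ![0, 0, 0], ![0, 1, 0]] <
      Tps ρ k ![![0, 1/(ρ+1), 0], ![0, ρ/(ρ+1), 0]] ∧
    Tps ρ k ![![0, 1/(ρ+1), 0], ![0, ρ/(ρ+1), 0]] ≤ Tis ρ k ∧
    (Tps ρ k ![![0, 1/(ρ+1), 0], ![0, ρ/(ρ+1), 0]] = Tis ρ k ↔ k = 0) := by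
  rw [tfs_zero_absorbing, tps_zero_blocked k (by positivity)]
  exact ⟨fullStationary_zero_absorbing ρ k, rfl, partialStationary_zero_blocked k hρ.le, rfl,
    by positivity, div_add_one_le_tis hρ.le hk.1, div_add_one_eq_tis_iff hρ hk.1⟩
end

section
/- Let ρ > 0 and γ ∈ (0,1]. Define π(0,0) = (γ³ + γ² + 2γ²ρ)/(γ²(ρ+1)³ + γ³(ρ+1)² + ρ(ρ+γ)² + 2γρ²(ρ+γ)), π(0,1) = ρ²/(γ² + γ + 2γρ) · π(0,0), π(0,2) = (ρ² + (γ+1)ρ)/(γ + 2ρ + 1) · π(0,0), π(1,0) = (ρ² + (γ+1)ρ)/(γ + 2ρ + 1) · π(0,0), π(1,1) = (ρ³ + γρ²)/(γ² + γ + 2γρ) · π(0,0), π(1,2) = (ρ³ + (γ+1)ρ²)/(γ + 2ρ + 1) · π(0,0), π(2,0) = ρ²/(γ² + γ + 2γρ) · π(0,0), π(2,1) = ρ³/(γ³ + γ² + 2γ²ρ) · π(0,0), π(2,2) = (ρ³ + γρ²)/(γ² + γ + 2γρ) · π(0,0). Then all π(i,j) are nonnegative, they sum to 1, and they satisfy the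 full flexibility balance equations with k = 1; i.e., π is the stationary distribution of the symmetric full flexibility system. -/
private lemma fullStat_of (ρ γ p q01 q02 q10 q11 q12 q20 q21 q22 : ℝ)
    (hp : 0 ≤ p) (h01 : 0 ≤ q01) (h02 : 0 ≤ q02) (h10 : 0 ≤ q10) (h11 : 0 ≤ q11)
    (h12 : 0 ≤ q12) (h20 : 0 ≤ q20) (h21 : 0 ≤ q21) (h22 : 0 ≤ q22)
    (hsum : (1 + q01 + q02 + q10 + q11 + q12 + q20 + q21 + q22) * p = 1)
    (e1 : (ρ + 1*ρ) * 1 = q10 + γ * q01 + q02 + γ * q20)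
    (e2 : (ρ + 1*ρ + 1) * q10 = ρ * 1 + γ * q11 + q12)
    (e3 : (ρ + 1*ρ + γ) * q20 = γ * q21 + q22)
    (e4 : (ρ + 1*ρ + γ) * q01 = q11 + γ * q21)
    (e5 : (1 + γ) * q11 = ρ * q10 + ρ * q01)
    (e6 : 2 * γ * q21 = ρ * q20 + 1*ρ * q01)
    (e7 : (ρ + 1*ρ + 1) * q02 = 1*ρ * 1 + q12 + γ * q22)
    (e8 : 2 * q12 = ρ * q02 + 1*ρ * q10)
    (e9 : (γ + 1) * q22 = 1*ρ * q20 + 1*ρ * q02) :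
    FullStationary ρ 1 γ ![![p, q01*p, q02*p],![q10*p, q11*p, q12*p],![q20*p, q21*p, q22*p]] := by
  refine ⟨?_, ?_, ?_, ?_, ?_, ?_, ?_, ?_, ?_, ?_, ?_⟩
  · intro x y
    fin_cases x <;> fin_cases y <;> simp <;> positivity
  · simp only [Fin.sum_univ_three, Matrix.cons_val', Matrix.cons_val_zero, Matrix.cons_val_one,
      Matrix.head_cons, Matrix.empty_val', Matrix.cons_val_fin_one, Matrix.head_fin_const,
      Matrix.cons_val_two, Matrix.tail_cons]
    linear_combination hsum
  all_goals simp only [Matrix.cons_val', Matrix.cons_val_zero, Matrix.cons_val_one,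
      Matrix.head_cons, Matrix.empty_val', Matrix.cons_val_fin_one, Matrix.head_fin_const,
      Matrix.cons_val_two, Matrix.tail_cons]
  · linear_combination p * e1
  · linear_combination p * e2
  · linear_combination p * e3
  · linear_combination p * e4
  · linear_combination p * e5
  · linear_combination p * e6
  · linear_combination p * e7
  · linear_combination p * e8
  · linear_combination p * e9

set_option maxHeartbeats 1600000 in
/-- the given family `π` is the stationary distribution of the symmetric
(`k = 1`) full flexibility system. -/
theorem stmt_4 (ρ γ : ℝ) (hρ : 0 < ρ) (hγ : γ ∈ Set.Ioc (0:ℝ) 1) :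
    FullStationary ρ 1 γ
      (![![(γ^3 + γ^2 + 2*γ^2*ρ)/(γ^2*(ρ+1)^3 + γ^3*(ρ+1)^2 + ρ*(ρ+γ)^2 + 2*γ*ρ^2*(ρ+γ)),
          ρ^2/(γ^2 + γ + 2*γ*ρ) *
            ((γ^3 + γ^2 + 2*γ^2*ρ)/(γ^2*(ρ+1)^3 + γ^3*(ρ+1)^2 + ρ*(ρ+γ)^2 + 2*γ*ρ^2*(ρ+γ))),
          (ρ^2 + (γ+1)*ρ)/(γ + 2*ρ + 1) *
            ((γ^3 + γ^2 + 2*γ^2*ρ)/(γ^2*(ρ+1)^3 + γ^3*(ρ+1)^2 + ρ*(ρ+γ)^2 + 2*γ*ρ^2*(ρ+γ)))],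
        ![(ρ^2 + (γ+1)*ρ)/(γ + 2*ρ + 1) *
            ((γ^3 + γ^2 + 2*γ^2*ρ)/(γ^2*(ρ+1)^3 + γ^3*(ρ+1)^2 + ρ*(ρ+γ)^2 + 2*γ*ρ^2*(ρ+γ))),
          (ρ^3 + γ*ρ^2)/(γ^2 + γ + 2*γ*ρ) *
            ((γ^3 + γ^2 + 2*γ^2*ρ)/(γ^2*(ρ+1)^3 + γ^3*(ρ+1)^2 + ρ*(ρ+γ)^2 + 2*γ*ρ^2*(ρ+γ))),
          (ρ^3 + (γ+1)*ρ^2)/(γ + 2*ρ + 1) *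
            ((γ^3 + γ^2 + 2*γ^2*ρ)/(γ^2*(ρ+1)^3 + γ^3*(ρ+1)^2 + ρ*(ρ+γ)^2 + 2*γ*ρ^2*(ρ+γ)))],
        ![ρ^2/(γ^2 + γ + 2*γ*ρ) *
            ((γ^3 + γ^2 + 2*γ^2*ρ)/(γ^2*(ρ+1)^3 + γ^3*(ρ+1)^2 + ρ*(ρ+γ)^2 + 2*γ*ρ^2*(ρ+γ))),
          ρ^3/(γ^3 + γ^2 + 2*γ^2*ρ) *
            ((γ^3 + γ^2 + 2*γ^2*ρ)/(γ^2*(ρ+1)^3 + γ^3*(ρ+1)^2 + ρ*(ρ+γ)^2 + 2*γ*ρ^2*(ρ+γ))),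
          (ρ^3 + γ*ρ^2)/(γ^2 + γ + 2*γ*ρ) *
            ((γ^3 + γ^2 + 2*γ^2*ρ)/(γ^2*(ρ+1)^3 + γ^3*(ρ+1)^2 + ρ*(ρ+γ)^2 + 2*γ*ρ^2*(ρ+γ)))]]) := by
  obtain ⟨hγ0, hγ1⟩ := hγ
  have hD : 0 < γ^2*(ρ+1)^3 + γ^3*(ρ+1)^2 + ρ*(ρ+γ)^2 + 2*γ*ρ^2*(ρ+γ) := by positivity
  have hA : 0 < γ^2 + γ + 2*γ*ρ := by positivity
  have hB : 0 < γ + 2*ρ + 1 := by positivity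
  have hC : 0 < γ^3 + γ^2 + 2*γ^2*ρ := by positivity
  have hD' := hD.ne'
  have hA' := hA.ne'
  have hB' := hB.ne'
  have hC' := hC.ne'
  apply fullStat_of
  · positivity
  · positivity
  · positivity
  · positivity
  · positivity
  · positivity
  · positivity
  · positivity
  · positivity
  all_goals field_simp
  all_goals ring
end

section
/- Let ρ > 0 and k ∈ (0,1). There exists exactly one γ ∈ (0,1) with the following property: there exists a stationary distribution π of the full flexibility system with parameters (ρ, k, γ) such that T_fs(π) = T_is, where T_is = ρ/(ρ+1) + kρ/(kρ+1). (This unique value is denoted γ^b.) -/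
set_option maxHeartbeats 1600000


namespace Stmt9Aux

def X00 (r k g : ℝ) : ℝ := (4*g^3 + 8*g^4 + 4*g^5 + 2*r*g^2 + 14*r*g^3 + 14*r*g^4 + 2*r*g^5 + 2*r*k*g^2 + 14*r*k*g^3 + 14*r*k*g^4 + 2*r*k*g^5 + 5*r^2*g^2 + 10*r^2*g^3 + 5*r^2*g^4 + 6*r^2*k*g^2 + 28*r^2*k*g^3 + 6*r^2*k*g^4 + 5*r^2*k^2*g^2 + 10*r^2*k^2*g^3 + 5*r^2*k^2*g^4 + 2*r^3*g^2 + 2*r^3*g^3 + 6*r^3*k*g^2 + 6*r^3*k*g^3 + 6*r^3*k^2*g^2 + 6*r^3*k^2*g^3 + 2*r^3*k^3*g^2 + 2*r^3*k^3*g^3)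
def X10 (r k g : ℝ) : ℝ := (4*r*g^3 + 8*r*g^4 + 4*r*g^5 + 2*r^2*g^2 + 10*r^2*g^3 + 10*r^2*g^4 + 2*r^2*g^5 + 2*r^2*k*g^2 + 14*r^2*k*g^3 + 14*r^2*k*g^4 + 2*r^2*k*g^5 + 3*r^3*g^2 + 6*r^3*g^3 + 3*r^3*g^4 + 4*r^3*k*g^2 + 18*r^3*k*g^3 + 6*r^3*k*g^4 + 5*r^3*k^2*g^2 + 8*r^3*k^2*g^3 + 3*r^3*k^2*g^4 + r^4*g^2 + r^4*g^3 + 3*r^4*k*g^2 + 3*r^4*k*g^3 + 3*r^4*k^2*g^2 + 3*r^4*k^2*g^3 + r^4*k^3*g^2 + r^4*k^3*g^3)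
def X20 (r k g : ℝ) : ℝ := (4*r^2*k^2*g^2 + 4*r^2*k^2*g^3 + 2*r^3*k*g + 2*r^3*k*g^2 + 10*r^3*k^2*g^2 + 2*r^3*k^2*g^3 + 2*r^3*k^3*g + 4*r^3*k^3*g^2 + 2*r^3*k^3*g^3 + r^4*k*g + r^4*k*g^2 + 3*r^4*k^2*g + 3*r^4*k^2*g^2 + 3*r^4*k^3*g + 3*r^4*k^3*g^2 + r^4*k^4*g + r^4*k^4*g^2)
def X01 (r k g : ℝ) : ℝ := (4*r^2*g^2 + 4*r^2*g^3 + 2*r^3*g + 4*r^3*g^2 + 2*r^3*g^3 + 10*r^3*k*g^2 + 2*r^3*k*g^3 + 2*r^3*k^2*g + 2*r^3*k^2*g^2 + r^4*g + r^4*g^2 + 3*r^4*k*g + 3*r^4*k*g^2 + 3*r^4*k^2*g + 3*r^4*k^2*g^2 + r^4*k^3*g + r^4*k^3*g^2)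
def X11 (r k g : ℝ) : ℝ := (4*r^2*g^3 + 4*r^2*g^4 + 6*r^3*g^2 + 8*r^3*g^3 + 2*r^3*g^4 + 2*r^3*k*g^2 + 12*r^3*k*g^3 + 2*r^3*k*g^4 + 2*r^4*g + 5*r^4*g^2 + 3*r^4*g^3 + 14*r^4*k*g^2 + 6*r^4*k*g^3 + 2*r^4*k^2*g + 5*r^4*k^2*g^2 + 3*r^4*k^2*g^3 + r^5*g + r^5*g^2 + 3*r^5*k*g + 3*r^5*k*g^2 + 3*r^5*k^2*g + 3*r^5*k^2*g^2 + r^5*k^3*g + r^5*k^3*g^2)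
def X21 (r k g : ℝ) : ℝ := (2*r^3*k*g + 2*r^3*k*g^2 + 2*r^3*k^2*g + 2*r^3*k^2*g^2 + 2*r^4*k + 3*r^4*k*g + r^4*k*g^2 + 10*r^4*k^2*g + 2*r^4*k^2*g^2 + 2*r^4*k^3 + 3*r^4*k^3*g + r^4*k^3*g^2 + r^5*k + r^5*k*g + 3*r^5*k^2 + 3*r^5*k^2*g + 3*r^5*k^3 + 3*r^5*k^3*g + r^5*k^4 + r^5*k^4*g)
def X02 (r k g : ℝ) : ℝ := (4*r*k*g^3 + 8*r*k*g^4 + 4*r*k*g^5 + 2*r^2*k*g^2 + 14*r^2*k*g^3 + 14*r^2*k*g^4 + 2*r^2*k*g^5 + 2*r^2*k^2*g^2 + 10*r^2*k^2*g^3 + 10*r^2*k^2*g^4 + 2*r^2*k^2*g^5 + 5*r^3*k*g^2 + 8*r^3*k*g^3 + 3*r^3*k*g^4 + 4*r^3*k^2*g^2 + 18*r^3*k^2*g^3 + 6*r^3*k^2*g^4 + 3*r^3*k^3*g^2 + 6*r^3*k^3*g^3 + 3*r^3*k^3*g^4 + r^4*k*g^2 + r^4*k*g^3 + 3*r^4*k^2*g^2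 + 3*r^4*k^2*g^3 + 3*r^4*k^3*g^2 + 3*r^4*k^3*g^3 + r^4*k^4*g^2 + r^4*k^4*g^3)
def X12 (r k g : ℝ) : ℝ := (4*r^2*k*g^3 + 8*r^2*k*g^4 + 4*r^2*k*g^5 + 2*r^3*k*g^2 + 12*r^3*k*g^3 + 12*r^3*k*g^4 + 2*r^3*k*g^5 + 2*r^3*k^2*g^2 + 12*r^3*k^2*g^3 + 12*r^3*k^2*g^4 + 2*r^3*k^2*g^5 + 4*r^4*k*g^2 + 7*r^4*k*g^3 + 3*r^4*k*g^4 + 4*r^4*k^2*g^2 + 18*r^4*k^2*g^3 + 6*r^4*k^2*g^4 + 4*r^4*k^3*g^2 + 7*r^4*k^3*g^3 + 3*r^4*k^3*g^4 + r^5*k*g^2 + r^5*k*g^3 + 3*r^5*k^2*g^2 + 3*r^5*k^2*g^3 + 3*r^5*k^3*g^2 + 3*r^5*k^3*g^3 + r^5*k^4*g^2 + r^5*k^4*g^3)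
def X22 (r k g : ℝ) : ℝ := (4*r^2*k^2*g^3 + 4*r^2*k^2*g^4 + 2*r^3*k^2*g^2 + 12*r^3*k^2*g^3 + 2*r^3*k^2*g^4 + 6*r^3*k^3*g^2 + 8*r^3*k^3*g^3 + 2*r^3*k^3*g^4 + 2*r^4*k^2*g + 5*r^4*k^2*g^2 + 3*r^4*k^2*g^3 + 14*r^4*k^3*g^2 + 6*r^4*k^3*g^3 + 2*r^4*k^4*g + 5*r^4*k^4*g^2 + 3*r^4*k^4*g^3 + r^5*k^2*g + r^5*k^2*g^2 + 3*r^5*k^3*g + 3*r^5*k^3*g^2 + 3*r^5*k^4*g + 3*r^5*k^4*g^2 + r^5*k^5*g + r^5*k^5*g^2)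
def Dpoly (r k g : ℝ) : ℝ := (4*g^3 + 8*g^4 + 4*g^5 + 2*r*g^2 + 18*r*g^3 + 22*r*g^4 + 6*r*g^5 + 2*r*k*g^2 + 18*r*k*g^3 + 22*r*k*g^4 + 6*r*k*g^5 + 11*r^2*g^2 + 28*r^2*g^3 + 19*r^2*g^4 + 2*r^2*g^5 + 10*r^2*k*g^2 + 60*r^2*k*g^3 + 42*r^2*k*g^4 + 8*r^2*k*g^5 + 11*r^2*k^2*g^2 + 28*r^2*k^2*g^3 + 19*r^2*k^2*g^4 + 2*r^2*k^2*g^5 + 2*r^3*g + 15*r^3*g^2 + 18*r^3*g^3 + 5*r^3*g^4 + 4*r^3*k*g + 33*r^3*k*g^2 + 58*r^3*k*g^3 + 23*r^3*k*g^4 + 2*r^3*k*g^5 + 4*r^3*k^2*g + 33*r^3*k^2*g^2 + 58*r^3*k^2*g^3 + 23*r^3*k^2*g^4 + 2*r^3*k^2*g^5 + 2*r^3*k^3*g + 15*r^3*k^3*g^2 + 18*r^3*k^3*g^3 + 5*r^3*k^3*g^4 + 3*r^4*g + 7*r^4*g^2 + 4*r^4*g^3 + 2*r^4*k + 7*r^4*k*g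 + 27*r^4*k*g^2 + 17*r^4*k*g^3 + 3*r^4*k*g^4 + 20*r^4*k^2*g + 28*r^4*k^2*g^2 + 30*r^4*k^2*g^3 + 6*r^4*k^2*g^4 + 2*r^4*k^3 + 7*r^4*k^3*g + 27*r^4*k^3*g^2 + 17*r^4*k^3*g^3 + 3*r^4*k^3*g^4 + 3*r^4*k^4*g + 7*r^4*k^4*g^2 + 4*r^4*k^4*g^3 + r^5*g + r^5*g^2 + r^5*k + 4*r^5*k*g + 4*r^5*k*g^2 + r^5*k*g^3 + 3*r^5*k^2 + 7*r^5*k^2*g + 7*r^5*k^2*g^2 + 3*r^5*k^2*g^3 + 3*r^5*k^3 + 7*r^5*k^3*g + 7*r^5*k^3*g^2 + 3*r^5*k^3*g^3 + r^5*k^4 + 4*r^5*k^4*g + 4*r^5*k^4*g^2 + r^5*k^4*g^3 + r^5*k^5*g + r^5*k^5*g^2)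
def XS (r k g : ℝ) : ℝ := X11 r k g + X12 r k g + X21 r k g + X22 r k g
def cB0 (r k : ℝ) : ℝ := (2*r^5*k + 2*r^5*k^2 + 2*r^5*k^3 + 2*r^5*k^4 + r^6*k + 8*r^6*k^2 + 6*r^6*k^3 + 8*r^6*k^4 + r^6*k^5 + 2*r^7*k^2 + 6*r^7*k^3 + 6*r^7*k^4 + 2*r^7*k^5)
def cB1 (r k : ℝ) : ℝ := (2*r^4*k + 4*r^4*k^2 + 2*r^4*k^3 + 3*r^5*k + 17*r^5*k^2 + 17*r^5*k^3 + 3*r^5*k^4 + 3*r^6*k + 6*r^6*k^2 + 30*r^6*k^3 + 6*r^6*k^4 + 3*r^6*k^5 + r^7*k + 3*r^7*k^2 + 4*r^7*k^3 + 4*r^7*k^4 + 3*r^7*k^5 + r^7*k^6)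
def cA2 (r k : ℝ) : ℝ := (2*r^3 + 2*r^3*k + 2*r^3*k^2 + 2*r^3*k^3 + 5*r^4 + 14*r^4*k^2 + 5*r^4*k^4 + 4*r^5 + 2*r^5*k + 10*r^5*k^2 + 10*r^5*k^3 + 2*r^5*k^4 + 4*r^5*k^5 + r^6 + 2*r^6*k + r^6*k^2 + 24*r^6*k^3 + r^6*k^4 + 2*r^6*k^5 + r^6*k^6 + 2*r^7*k^2 + 6*r^7*k^3 + 6*r^7*k^4 + 2*r^7*k^5)
def cA3 (r k : ℝ) : ℝ := (4*r^2 + 4*r^2*k^2 + 14*r^3 + 14*r^3*k + 14*r^3*k^2 + 14*r^3*k^3 + 16*r^4 + 34*r^4*k + 28*r^4*k^2 + 34*r^4*k^3 + 16*r^4*k^4 + 7*r^5 + 26*r^5*k + 39*r^5*k^2 + 39*r^5*k^3 + 26*r^5*k^4 + 7*r^5*k^5 + r^6 + 7*r^6*k + 21*r^6*k^2 + 22*r^6*k^3 + 21*r^6*k^4 + 7*r^6*k^5 + r^6*k^6 + r^7*k + 3*r^7*k^2 + 4*r^7*k^3 + 4*r^7*k^4 + 3*r^7*k^5 + r^7*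k^6)
def cA4 (r k : ℝ) : ℝ := (8*r^2 + 8*r^2*k^2 + 18*r^3 + 18*r^3*k + 18*r^3*k^2 + 18*r^3*k^3 + 13*r^4 + 32*r^4*k + 30*r^4*k^2 + 32*r^4*k^3 + 13*r^4*k^4 + 3*r^5 + 17*r^5*k + 24*r^5*k^2 + 24*r^5*k^3 + 17*r^5*k^4 + 3*r^5*k^5 + 3*r^6*k + 6*r^6*k^2 + 6*r^6*k^3 + 6*r^6*k^4 + 3*r^6*k^5)
def cA5 (r k : ℝ) : ℝ := (4*r^2 + 4*r^2*k^2 + 6*r^3 + 6*r^3*k + 6*r^3*k^2 + 6*r^3*k^3 + 2*r^4 + 8*r^4*k + 4*r^4*k^2 + 8*r^4*k^3 + 2*r^4*k^4 + 2*r^5*k + 2*r^5*k^2 + 2*r^5*k^3 + 2*r^5*k^4)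
def Npoly (r k g : ℝ) : ℝ := g^2*(cA2 r k + cA3 r k * g + cA4 r k * g^2 + cA5 r k * g^3) - (cB0 r k + cB1 r k * g)

lemma Dpos {r k g : ℝ} (hr : 0 < r) (hk : 0 < k) (hg : 0 < g) : 0 < Dpoly r k g := by
  unfold Dpoly; positivity

lemma coeffs_pos {r k : ℝ} (hr : 0 < r) (hk : 0 < k) :
    0 < cA2 r k ∧ 0 < cA3 r k ∧ 0 < cA4 r k ∧ 0 < cA5 r k ∧ 0 < cB0 r k ∧ 0 < cB1 r k := by
  refine ⟨?_, ?_, ?_, ?_, ?_, ?_⟩ <;> first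
    | (unfold cA2; positivity) | (unfold cA3; positivity) | (unfold cA4; positivity)
    | (unfold cA5; positivity) | (unfold cB0; positivity) | (unfold cB1; positivity)

lemma N1pos {r k : ℝ} (hr : 0 < r) (hk : 0 < k) : 0 < Npoly r k 1 := by
  have h : Npoly r k 1 = (16*r^2 + 16*r^2*k^2 + 40*r^3 + 40*r^3*k + 40*r^3*k^2 + 40*r^3*k^3 + 36*r^4 + 72*r^4*k + 72*r^4*k^2 + 72*r^4*k^3 + 36*r^4*k^4 + 14*r^5 + 42*r^5*k + 56*r^5*k^2 + 56*r^5*k^3 + 42*r^5*k^4 + 14*r^5*k^5 + 2*r^6 + 8*r^6*k + 14*r^6*k^2 + 16*r^6*k^3 + 14*r^6*k^4 + 8*r^6*k^5 + 2*r^6*k^6) := by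
    unfold Npoly cA2 cA3 cA4 cA5 cB0 cB1; ring
  rw [h]; positivity

lemma N0neg {r k : ℝ} (hr : 0 < r) (hk : 0 < k) : Npoly r k 0 < 0 := by
  have h : Npoly r k 0 = -cB0 r k := by unfold Npoly; ring
  rw [h, neg_lt_zero]; exact (coeffs_pos hr hk).2.2.2.2.1

lemma cert {r k g : ℝ} {π : Fin 3 → Fin 3 → ℝ} (hst : FullStationary r k g π) :
    Dpoly r k g * (π 1 1 + π 1 2 + π 2 1 + π 2 2) = XS r k g := by
  obtain ⟨-, hsum, h1, h2, h3, h4, h5, h6, h7, h8, -⟩ := hst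
  simp only [Fin.sum_univ_three] at hsum
  unfold Dpoly XS X11 X12 X21 X22
  linear_combination
    (-4*g^3 - 4*g^4 - 2*r*g - 4*r*g^2 - 16*r*g^3 - 8*r*g^4 - 2*r*g^5 - 6*r*k*g^2 - 16*r*k*g^3 - 10*r*k*g^4 - 9*r^2*g - 10*r^2*g^2 - 14*r^2*g^3 - 7*r^2*g^4 - 2*r^2*g^5 - 2*r^2*k - 7*r^2*k*g - 25*r^2*k*g^2 - 39*r^2*k*g^3 - 11*r^2*k*g^4 - 2*r^2*k^2*g - 17*r^2*k^2*g^2 - 19*r^2*k^2*g^3 - 4*r^2*k^2*g^4 - 2*r^3 - 6*r^3*g - 6*r^3*g^2 - 5*r^3*g^3 - 3*r^3*g^4 - 3*r^3*k - 23*r^3*k*g - 19*r^3*k*g^2 - 18*r^3*k*g^3 - 3*r^3*k*g^4 - 5*r^3*k^2 - 10*r^3*k^2*g - 36*r^3*k^2*g^2 - 15*r^3*k^2*g^3 - 5*r^3*k^3*g - 11*r^3*k^3*g^2 - 6*r^3*k^3*g^3 - r^4 - r^4*g - r^4*g^2 - r^4*g^3 - 4*r^4*k - 6*r^4*k*g -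 4*r^4*k*g^2 - 2*r^4*k*g^3 - 5*r^4*k^2 - 11*r^4*k^2*g - 7*r^4*k^2*g^2 - r^4*k^2*g^3 - 2*r^4*k^3 - 8*r^4*k^3*g - 6*r^4*k^3*g^2 - 2*r^4*k^4*g - 2*r^4*k^4*g^2) * h1 +
    (-4*g^3 - 4*g^4 - 2*r*g - 4*r*g^2 - 12*r*g^3 - 4*r*g^4 - 2*r*g^5 - 6*r*k*g^2 - 14*r*k*g^3 - 6*r*k*g^4 + 2*r*k*g^5 - 9*r^2*g - 4*r^2*g^2 - 6*r^2*g^3 - 5*r^2*g^4 - 2*r^2*g^5 - 2*r^2*k - 5*r^2*k*g - 20*r^2*k*g^2 - 21*r^2*k*g^3 - 4*r^2*k*g^4 - 2*r^2*k^2*g - 16*r^2*k^2*g^2 - 13*r^2*k^2*g^3 + 3*r^2*k^2*g^4 + 2*r^2*k^2*g^5 - 2*r^3 - 4*r^3*g - r^3*g^2 - 2*r^3*g^3 - 3*r^3*g^4 - r^3*k - 20*r^3*k*g - 2*r^3*k*g^2 - 10*r^3*k*g^3 - 3*r^3*k*g^4 - 5*r^3*k^2 - 3*r^3*k^2*g -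 28*r^3*k^2*g^2 - 3*r^3*k^2*g^3 + 3*r^3*k^2*g^4 - 5*r^3*k^3*g - 9*r^3*k^3*g^2 - r^3*k^3*g^3 + 3*r^3*k^3*g^4 - r^4 - r^4*g^3 - 3*r^4*k - 2*r^4*k*g - r^4*k*g^2 - 2*r^4*k*g^3 - 3*r^4*k^2 - 6*r^4*k^2*g - 3*r^4*k^2*g^2 - r^4*k^3 - 6*r^4*k^3*g - 3*r^4*k^3*g^2 + 2*r^4*k^3*g^3 - 2*r^4*k^4*g - r^4*k^4*g^2 + r^4*k^4*g^3) * h2 +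
    (-4*g^3 - 4*g^4 - 14*r*g^3 - 8*r*g^4 - 2*r*g^5 - 2*r*k*g^2 - 12*r*k*g^3 - 10*r*k*g^4 - 2*r^2*g^2 - 15*r^2*g^3 - 7*r^2*g^4 - 2*r^2*g^5 + 2*r^2*k*g - 5*r^2*k*g^2 - 36*r^2*k*g^3 - 13*r^2*k*g^4 - 9*r^2*k^2*g^2 - 13*r^2*k^2*g^3 - 4*r^2*k^2*g^4 - 3*r^3*g^2 - 6*r^3*g^3 - 3*r^3*g^4 + r^3*k*g - 11*r^3*k*g^2 - 23*r^3*k*g^3 - 3*r^3*k*g^4 + r^3*k^2*g - 20*r^3*k^2*g^2 - 15*r^3*k^2*g^3 - 2*r^3*k^2*g^4 - 2*r^3*k^3*g - 6*r^3*k^3*g^2 - 4*r^3*k^3*g^3 - r^4*g^2 - r^4*g^3 - r^4*k*g - 4*r^4*k*g^2 - 3*r^4*k*g^3 - 3*r^4*k^2*g - 6*r^4*k^2*g^2 - 3*r^4*k^2*g^3 - 3*r^4*k^3*g - 4*r^4*k^3*g^2 - r^4*k^3*g^3 - r^4*k^4*g - r^4*k^4*g^2) * h3 +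
    (-4*g^3 - 4*g^4 - 2*r*g - 12*r*g^3 - 8*r*g^4 - 2*r*g^5 + 2*r*k*g - 2*r*k*g^2 - 14*r*k*g^3 - 10*r*k*g^4 - 7*r^2*g - 2*r^2*g^2 - 8*r^2*g^3 - 7*r^2*g^4 - 2*r^2*g^5 + 2*r^2*k*g - 5*r^2*k*g^2 - 36*r^2*k*g^3 - 13*r^2*k*g^4 + 7*r^2*k^2*g - 9*r^2*k^2*g^2 - 20*r^2*k^2*g^3 - 4*r^2*k^2*g^4 - 2*r^3 - 3*r^3*g - r^3*g^2 - 3*r^3*g^3 - 3*r^3*g^4 + 2*r^3*k - 12*r^3*k*g - 3*r^3*k*g^2 - 18*r^3*k*g^3 - 5*r^3*k*g^4 - 2*r^3*k^2 + 14*r^3*k^2*g - 28*r^3*k^2*g^2 - 20*r^3*k^2*g^3 + 2*r^3*k^3 + r^3*k^3*g - 8*r^3*k^3*g^2 - 7*r^3*k^3*g^3 - r^4 - r^4*g^3 - 2*r^4*k - r^4*k*g - 2*r^4*k*g^2 - 3*r^4*k*g^3 - 3*r^4*k^2*g - 6*r^4*k^2*g^2 - 3*r^4*k^2*g^3 + 2*r^4*k^3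 - 3*r^4*k^3*g - 6*r^4*k^3*g^2 - r^4*k^3*g^3 + r^4*k^4 - r^4*k^4*g - 2*r^4*k^4*g^2) * h4 +
    (-2*r*g + 2*r*g^2 + 2*r*g^4 - 2*r*g^5 + 2*r*k*g - 2*r*k*g^2 - 2*r*k*g^4 + 2*r*k*g^5 - 7*r^2*g + 7*r^2*g^2 + 5*r^2*g^3 - 3*r^2*g^4 - 2*r^2*g^5 + 7*r^2*k^2*g - 7*r^2*k^2*g^2 - 5*r^2*k^2*g^3 + 3*r^2*k^2*g^4 + 2*r^2*k^2*g^5 - 2*r^3 - r^3*g + 5*r^3*g^2 + r^3*g^3 - 3*r^3*g^4 + 2*r^3*k - 13*r^3*k*g + 17*r^3*k*g^2 - 3*r^3*k*g^3 - 3*r^3*k*g^4 - 2*r^3*k^2 + 13*r^3*k^2*g - 17*r^3*k^2*g^2 + 3*r^3*k^2*g^3 + 3*r^3*k^2*g^4 + 2*r^3*k^3 + r^3*k^3*g - 5*r^3*k^3*g^2 - r^3*k^3*g^3 + 3*r^3*k^3*g^4 - r^4 + r^4*g + r^4*g^2 - r^4*g^3 - 2*r^4*k + 2*r^4*k*g +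 2*r^4*k*g^2 - 2*r^4*k*g^3 + 2*r^4*k^3 - 2*r^4*k^3*g - 2*r^4*k^3*g^2 + 2*r^4*k^3*g^3 + r^4*k^4 - r^4*k^4*g - r^4*k^4*g^2 + r^4*k^4*g^3) * h5 +
    (2*g^2 - 2*g^4 + 9*r*g^2 - 2*r*g^3 - 5*r*g^4 - 2*r*g^5 + 2*r*k*g + 7*r*k*g^2 - 2*r*k*g^3 - 7*r*k*g^4 + 2*r^2*g + 10*r^2*g^2 - 4*r^2*g^3 - 6*r^2*g^4 - 2*r^2*g^5 + 7*r^2*k*g + 23*r^2*k*g^2 - 19*r^2*k*g^3 - 11*r^2*k*g^4 + 9*r^2*k^2*g + 3*r^2*k^2*g^2 - 9*r^2*k^2*g^3 - 3*r^2*k^2*g^4 + 3*r^3*g + 3*r^3*g^2 - 3*r^3*g^3 - 3*r^3*g^4 + 2*r^3*k + 8*r^3*k*g + 10*r^3*k*g^2 - 16*r^3*k*g^3 - 4*r^3*k*g^4 + 21*r^3*k^2*g - 7*r^3*k^2*g^2 - 13*r^3*k^2*g^3 - r^3*k^2*g^4 + 2*r^3*k^3 + 4*r^3*k^3*g - 2*r^3*k^3*g^2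 - 4*r^3*k^3*g^3 + r^4*g - r^4*g^3 + r^4*k + 3*r^4*k*g - r^4*k*g^2 - 3*r^4*k*g^3 + 3*r^4*k^2 + 3*r^4*k^2*g - 3*r^4*k^2*g^2 - 3*r^4*k^2*g^3 + 3*r^4*k^3 + r^4*k^3*g - 3*r^4*k^3*g^2 - r^4*k^3*g^3 + r^4*k^4 - r^4*k^4*g^2) * h6 +
    (-4*g^3 - 4*g^4 - 2*r*g - 4*r*g^2 - 14*r*g^3 - 4*r*g^4 - 6*r*k*g^2 - 12*r*k*g^3 - 6*r*k*g^4 - 9*r^2*g - 9*r^2*g^2 - 8*r^2*g^3 - 2*r^2*k - 5*r^2*k*g - 20*r^2*k*g^2 - 21*r^2*k*g^3 - 4*r^2*k*g^4 - 2*r^2*k^2*g - 11*r^2*k^2*g^2 - 11*r^2*k^2*g^3 - 2*r^2*k^2*g^4 - 2*r^3 - 6*r^3*g - 4*r^3*g^2 - 3*r^3*k - 16*r^3*k*g - 11*r^3*k*g^2 - 6*r^3*k*g^3 - 3*r^3*k^2 - 7*r^3*k^2*g - 19*r^3*k^2*g^2 - 7*r^3*k^2*g^3 - 3*r^3*k^3*g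 - 6*r^3*k^3*g^2 - 3*r^3*k^3*g^3 - r^4 - r^4*g - 3*r^4*k - 4*r^4*k*g - r^4*k*g^2 - 3*r^4*k^2 - 6*r^4*k^2*g - 3*r^4*k^2*g^2 - r^4*k^3 - 4*r^4*k^3*g - 3*r^4*k^3*g^2 - r^4*k^4*g - r^4*k^4*g^2) * h7 +
    (-2*g^3 + 2*g^5 - 2*r*g - 3*r*g^2 - 4*r*g^3 + 7*r*g^4 + 2*r*g^5 - 5*r*k*g^2 - 4*r*k*g^3 + 5*r*k*g^4 + 4*r*k*g^5 - 9*r^2*g - r^2*g^2 + 5*r^2*g^3 + 5*r^2*g^4 - 2*r^2*k - 5*r^2*k*g - 15*r^2*k*g^2 + 7*r^2*k*g^3 + 13*r^2*k*g^4 + 2*r^2*k*g^5 - 2*r^2*k^2*g - 8*r^2*k^2*g^2 + 8*r^2*k^2*g^4 + 2*r^2*k^2*g^5 - 2*r^3 - 4*r^3*g + 2*r^3*g^2 + 4*r^3*g^3 - 2*r^3*k - 17*r^3*k*g + 7*r^3*k*g^2 + 9*r^3*k*g^3 + 3*r^3*k*g^4 - 4*r^3*k^2 - 4*r^3*k^2*g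 - 10*r^3*k^2*g^2 + 12*r^3*k^2*g^3 + 6*r^3*k^2*g^4 - 3*r^3*k^3*g - 3*r^3*k^3*g^2 + 3*r^3*k^3*g^3 + 3*r^3*k^3*g^4 - r^4 + r^4*g^2 - 3*r^4*k - r^4*k*g + 3*r^4*k*g^2 + r^4*k*g^3 - 3*r^4*k^2 - 3*r^4*k^2*g + 3*r^4*k^2*g^2 + 3*r^4*k^2*g^3 - r^4*k^3 - 3*r^4*k^3*g + r^4*k^3*g^2 + 3*r^4*k^3*g^3 - r^4*k^4*g + r^4*k^4*g^3) * h8 +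
    (4*r^2*g^3 + 4*r^2*g^4 + 4*r^2*k*g^3 + 8*r^2*k*g^4 + 4*r^2*k*g^5 + 4*r^2*k^2*g^3 + 4*r^2*k^2*g^4 + 6*r^3*g^2 + 8*r^3*g^3 + 2*r^3*g^4 + 2*r^3*k*g + 6*r^3*k*g^2 + 24*r^3*k*g^3 + 14*r^3*k*g^4 + 2*r^3*k*g^5 + 2*r^3*k^2*g + 6*r^3*k^2*g^2 + 24*r^3*k^2*g^3 + 14*r^3*k^2*g^4 + 2*r^3*k^2*g^5 + 6*r^3*k^3*g^2 + 8*r^3*k^3*g^3 + 2*r^3*k^3*g^4 + 2*r^4*g + 5*r^4*g^2 + 3*r^4*g^3 + 2*r^4*k + 3*r^4*k*g + 19*r^4*k*g^2 + 13*r^4*k*g^3 + 3*r^4*k*g^4 + 14*r^4*k^2*g + 16*r^4*k^2*g^2 + 24*r^4*k^2*g^3 + 6*r^4*k^2*g^4 + 2*r^4*k^3 + 3*r^4*k^3*g + 19*r^4*k^3*g^2 + 13*r^4*k^3*g^3 + 3*r^4*k^3*g^4 + 2*r^4*k^4*g + 5*r^4*k^4*g^2 + 3*r^4*k^4*g^3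 + r^5*g + r^5*g^2 + r^5*k + 4*r^5*k*g + 4*r^5*k*g^2 + r^5*k*g^3 + 3*r^5*k^2 + 7*r^5*k^2*g + 7*r^5*k^2*g^2 + 3*r^5*k^2*g^3 + 3*r^5*k^3 + 7*r^5*k^3*g + 7*r^5*k^3*g^2 + 3*r^5*k^3*g^3 + r^5*k^4 + 4*r^5*k^4*g + 4*r^5*k^4*g^2 + r^5*k^4*g^3 + r^5*k^5*g + r^5*k^5*g^2) * hsum

lemma hTisM {r k : ℝ} (hr : 0 < r) (hk : 0 < k) :
    Tis r k * ((r+1)*(k*r+1)) = r*(k*r+1) + k*r*(r+1) := by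
  have h1 : r + 1 ≠ 0 := by positivity
  have h2 : k*r + 1 ≠ 0 := by positivity
  unfold Tis
  field_simp

lemma key {r k g : ℝ} (hr : 0 < r) (hk : 0 < k) {π : Fin 3 → Fin 3 → ℝ}
    (hst : FullStationary r k g π) :
    (Tfs r k π - Tis r k) * (Dpoly r k g * ((r+1)*(k*r+1))) = Npoly r k g := by
  have hc := cert hst
  have ht := hTisM hr hk
  unfold XS X11 X12 X21 X22 at hc
  unfold Tfs Npoly cA2 cA3 cA4 cA5 cB0 cB1 Dpoly
  unfold Dpoly at hc
  linear_combination (-(4*g^3 + 8*g^4 + 4*g^5 + 2*r*g^2 + 18*r*g^3 + 22*r*g^4 + 6*r*g^5 + 2*r*k*g^2 + 18*r*k*g^3 + 22*r*k*g^4 + 6*r*k*g^5 + 11*r^2*g^2 + 28*r^2*g^3 + 19*r^2*g^4 + 2*r^2*g^5 + 10*r^2*k*g^2 + 60*r^2*k*g^3 + 42*r^2*k*g^4 + 8*r^2*k*g^5 + 11*r^2*k^2*g^2 + 28*r^2*k^2*g^3 + 19*r^2*k^2*g^4 + 2*r^2*k^2*g^5 + 2*r^3*g + 15*r^3*g^2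 + 18*r^3*g^3 + 5*r^3*g^4 + 4*r^3*k*g + 33*r^3*k*g^2 + 58*r^3*k*g^3 + 23*r^3*k*g^4 + 2*r^3*k*g^5 + 4*r^3*k^2*g + 33*r^3*k^2*g^2 + 58*r^3*k^2*g^3 + 23*r^3*k^2*g^4 + 2*r^3*k^2*g^5 + 2*r^3*k^3*g + 15*r^3*k^3*g^2 + 18*r^3*k^3*g^3 + 5*r^3*k^3*g^4 + 3*r^4*g + 7*r^4*g^2 + 4*r^4*g^3 + 2*r^4*k + 7*r^4*k*g + 27*r^4*k*g^2 + 17*r^4*k*g^3 + 3*r^4*k*g^4 + 20*r^4*k^2*g + 28*r^4*k^2*g^2 + 30*r^4*k^2*g^3 + 6*r^4*k^2*g^4 + 2*r^4*k^3 + 7*r^4*k^3*g + 27*r^4*k^3*g^2 + 17*r^4*k^3*g^3 + 3*r^4*k^3*g^4 + 3*r^4*k^4*g + 7*r^4*k^4*g^2 + 4*r^4*k^4*g^3 + r^5*g + r^5*g^2 + r^5*k + 4*r^5*k*g + 4*r^5*k*g^2 + r^5*k*g^3 + 3*r^5*k^2 + 7*r^5*k^2*g + 7*r^5*k^2*g^2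 + 3*r^5*k^2*g^3 + 3*r^5*k^3 + 7*r^5*k^3*g + 7*r^5*k^3*g^2 + 3*r^5*k^3*g^3 + r^5*k^4 + 4*r^5*k^4*g + 4*r^5*k^4*g^2 + r^5*k^4*g^3 + r^5*k^5*g + r^5*k^5*g^2)) * ht + (-((k+1)*r*(r+1)*(k*r+1))) * hc

/-- the explicit stationary distribution -/
noncomputable def piSol (r k g : ℝ) : Fin 3 → Fin 3 → ℝ :=
  ![![X00 r k g / Dpoly r k g, X01 r k g / Dpoly r k g, X02 r k g / Dpoly r k g],
    ![X10 r k g / Dpoly r k g, X11 r k g / Dpoly r k g, X12 r k g / Dpoly r k g],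
    ![X20 r k g / Dpoly r k g, X21 r k g / Dpoly r k g, X22 r k g / Dpoly r k g]]

lemma piSol_stationary {r k g : ℝ} (hr : 0 < r) (hk : 0 < k) (hg : 0 < g) :
    FullStationary r k g (piSol r k g) := by
  have hD := Dpos hr hk hg
  have hD' : Dpoly r k g ≠ 0 := ne_of_gt hD
  refine ⟨?_, ?_, ?_⟩
  · intro i j
    fin_cases i <;> fin_cases j <;>
      simp only [piSol, Matrix.cons_val', Matrix.cons_val_zero, Matrix.cons_val_one,
        Matrix.head_cons, Matrix.head_fin_const, Matrix.cons_val_fin_one, Matrix.empty_val',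
        Matrix.cons_val_two, Matrix.tail_cons] <;>
      apply div_nonneg _ (le_of_lt hD) <;>
      first
        | (unfold X00; positivity) | (unfold X01; positivity) | (unfold X02; positivity)
        | (unfold X10; positivity) | (unfold X11; positivity) | (unfold X12; positivity)
        | (unfold X20; positivity) | (unfold X21; positivity) | (unfold X22; positivity)
  · simp only [Fin.sum_univ_three, piSol, Matrix.cons_val', Matrix.cons_val_zero,
      Matrix.cons_val_one, Matrix.head_cons, Matrix.head_fin_const, Matrix.cons_val_fin_one,
      Matrix.empty_val', Matrix.cons_val_two, Matrix.tail_cons]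
    field_simp
    unfold X00 X01 X02 X10 X11 X12 X20 X21 X22 Dpoly
    ring
  · refine ⟨?_, ?_, ?_, ?_, ?_, ?_, ?_, ?_, ?_⟩ <;>
      simp only [piSol, Matrix.cons_val', Matrix.cons_val_zero, Matrix.cons_val_one,
        Matrix.head_cons, Matrix.head_fin_const, Matrix.cons_val_fin_one, Matrix.empty_val',
        Matrix.cons_val_two, Matrix.tail_cons] <;>
      field_simp <;>
      simp only [X00, X01, X02, X10, X11, X12, X20, X21, X22, Dpoly] <;>
      ring

lemma root_iff {r k g : ℝ} (hr : 0 < r) (hk : 0 < k) (hg : 0 < g) :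
    (∃ π : Fin 3 → Fin 3 → ℝ, FullStationary r k g π ∧ Tfs r k π = Tis r k) ↔
      Npoly r k g = 0 := by
  have hD := Dpos hr hk hg
  have hM : Dpoly r k g * ((r+1)*(k*r+1)) ≠ 0 := by positivity
  constructor
  · rintro ⟨π, hst, hT⟩
    have h := key hr hk hst
    rw [hT, sub_self, zero_mul] at h
    exact h.symm
  · intro hN
    refine ⟨piSol r k g, piSol_stationary hr hk hg, ?_⟩
    have h := key hr hk (piSol_stationary hr hk hg)
    rw [hN, mul_eq_zero] at h
    rcases h with h | h
    · linarith [sub_eq_zero.mp h]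
    · exact absurd h hM

lemma root_unique {r k : ℝ} (hr : 0 < r) (hk : 0 < k) {x y : ℝ}
    (hx0 : 0 < x) (hy0 : 0 < y) (hx : Npoly r k x = 0) (hy : Npoly r k y = 0) : x = y := by
  obtain ⟨ha2, ha3, ha4, ha5, hb0, hb1⟩ := coeffs_pos hr hk
  set a2 := cA2 r k; set a3 := cA3 r k; set a4 := cA4 r k; set a5 := cA5 r k
  set b0 := cB0 r k; set b1 := cB1 r k
  unfold Npoly at hx hy
  rw [sub_eq_zero] at hx hy
  rcases lt_trichotomy x y with h | h | h
  · exfalso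
    have hfac : (y^2*(a2 + a3*y + a4*y^2 + a5*y^3)) * (b0 + b1*x)
        - (x^2*(a2 + a3*x + a4*x^2 + a5*x^3)) * (b0 + b1*y)
        = (y - x) * (a2*b0*(x+y) + a2*b1*x*y + a3*b0*(x^2+x*y+y^2) + a3*b1*x*y*(x+y)
          + a4*b0*(x^3+x^2*y+x*y^2+y^3) + a4*b1*x*y*(x^2+x*y+y^2)
          + a5*b0*(x^4+x^3*y+x^2*y^2+x*y^3+y^4) + a5*b1*x*y*(x^3+x^2*y+x*y^2+y^3)) := by
      ring
    rw [hx, hy] at hfac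
    have hpos : 0 < (y - x) * (a2*b0*(x+y) + a2*b1*x*y + a3*b0*(x^2+x*y+y^2) + a3*b1*x*y*(x+y)
          + a4*b0*(x^3+x^2*y+x*y^2+y^3) + a4*b1*x*y*(x^2+x*y+y^2)
          + a5*b0*(x^4+x^3*y+x^2*y^2+x*y^3+y^4) + a5*b1*x*y*(x^3+x^2*y+x*y^2+y^3)) := by
      have hyx : 0 < y - x := by linarith
      positivity
    nlinarith [hfac, hpos]
  · exact h
  · exfalso
    have hfac : (x^2*(a2 + a3*x + a4*x^2 + a5*x^3)) * (b0 + b1*y)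
        - (y^2*(a2 + a3*y + a4*y^2 + a5*y^3)) * (b0 + b1*x)
        = (x - y) * (a2*b0*(y+x) + a2*b1*y*x + a3*b0*(y^2+y*x+x^2) + a3*b1*y*x*(y+x)
          + a4*b0*(y^3+y^2*x+y*x^2+x^3) + a4*b1*y*x*(y^2+y*x+x^2)
          + a5*b0*(y^4+y^3*x+y^2*x^2+y*x^3+x^4) + a5*b1*y*x*(y^3+y^2*x+y*x^2+x^3)) := by
      ring
    rw [hx, hy] at hfac
    have hpos : 0 < (x - y) * (a2*b0*(y+x) + a2*b1*y*x + a3*b0*(y^2+y*x+x^2) + a3*b1*y*x*(y+x)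
          + a4*b0*(y^3+y^2*x+y*x^2+x^3) + a4*b1*y*x*(y^2+y*x+x^2)
          + a5*b0*(y^4+y^3*x+y^2*x^2+y*x^3+x^4) + a5*b1*y*x*(y^3+y^2*x+y*x^2+x^3)) := by
      have hxy : 0 < x - y := by linarith
      positivity
    nlinarith [hfac, hpos]

end Stmt9Aux

/-- there is a unique `γ ∈ (0,1)` at which the throughput of the full
flexibility system equals that of the independent system (the crossing value `γ^b`). -/
theorem stmt_9 (ρ k : ℝ) (hρ : 0 < ρ) (hk : k ∈ Set.Ioo (0:ℝ) 1) :
    ∃! γ : ℝ, γ ∈ Set.Ioo (0:ℝ) 1 ∧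
      ∃ π : Fin 3 → Fin 3 → ℝ, FullStationary ρ k γ π ∧ Tfs ρ k π = Tis ρ k := by
  obtain ⟨hk0, hk1⟩ := hk
  have hcont : ContinuousOn (fun g => Stmt9Aux.Npoly ρ k g) (Set.Icc 0 1) := by
    apply Continuous.continuousOn
    unfold Stmt9Aux.Npoly
    fun_prop
  have h0 : Stmt9Aux.Npoly ρ k 0 < 0 := Stmt9Aux.N0neg hρ hk0
  have h1 : 0 < Stmt9Aux.Npoly ρ k 1 := Stmt9Aux.N1pos hρ hk0
  have hmem : (0:ℝ) ∈ Set.Ioo (Stmt9Aux.Npoly ρ k 0) (Stmt9Aux.Npoly ρ k 1) := ⟨h0, h1⟩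
  obtain ⟨γ0, hγ0mem, hγ0⟩ := intermediate_value_Ioo (by norm_num : (0:ℝ) ≤ 1) hcont hmem
  refine ⟨γ0, ⟨hγ0mem, (Stmt9Aux.root_iff hρ hk0 hγ0mem.1).2 hγ0⟩, ?_⟩
  rintro γ' ⟨hmem', hex'⟩
  have hN' : Stmt9Aux.Npoly ρ k γ' = 0 := (Stmt9Aux.root_iff hρ hk0 hmem'.1).1 hex'
  exact Stmt9Aux.root_unique hρ hk0 hmem'.1 hγ0mem.1 hN' hγ0
end

section
/- Let ρ > 0, γ ∈ (0,1), and k = 0. Let π be any stationary distribution of the full flexibility system and p any stationary distribution of the partial flexibility system, both with parameters (ρ, 0, γ). Then T_fs(π) = T_ps(p), and moreover T_fs(π) > T_is = ρ/(ρ+1). (In particular, for k = 0 the crossing values satisfy γ^r = γ^b = γ^g = 0.) -/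
lemma key_sys (ρ γ : ℝ) (hρ : 0 < ρ) (hγ0 : 0 < γ)
    (a b c d : ℝ)
    (e1 : ρ*a = b + γ*c)
    (e3 : (ρ+γ)*c = d)
    (e4 : (1+γ)*d = ρ*b + ρ*c)
    (e5 : a+b+c+d = 1) :
    d * (γ*(1+2*ρ+γ) + ρ*(ρ+γ)*(1+ρ+γ)) = (ρ+γ)*ρ^2 := by
  linear_combination (-(ρ+γ)*ρ)*e1 + (ρ*(1-γ))*e3 + ((ρ+γ)*(ρ+1))*e4 + ((ρ+γ)*ρ^2)*e5

/-- for `k = 0` the full and partial flexibility throughputs coincide and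
exceed the independent throughput `ρ/(ρ+1)`. -/
theorem stmt_11 (ρ γ : ℝ) (hρ : 0 < ρ) (hγ : γ ∈ Set.Ioo (0:ℝ) 1)
    (π : Fin 3 → Fin 3 → ℝ) (p : Fin 2 → Fin 3 → ℝ)
    (hπ : FullStationary ρ 0 γ π) (hp : PartialStationary ρ 0 γ p) :
    Tfs ρ 0 π = Tps ρ 0 p ∧ ρ/(ρ+1) < Tfs ρ 0 π := by
  obtain ⟨hγ0, hγ1⟩ := hγ
  obtain ⟨hπn, hπs, b1, b2, b3, b4, b5, b6, b7, b8, b9⟩ := hπ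
  obtain ⟨hpn, hps, c1, c2, c3, c4, c5, c6⟩ := hp
  have hz : ∀ c x : ℝ, 0 < c → c * x = 0 → x = 0 := fun c x hc h =>
    (mul_eq_zero.mp h).resolve_left (ne_of_gt hc)
  -- zeros in the full system
  have h22 : π 2 2 = 0 := by
    refine hz (γ+1) _ (by linarith) ?_
    linear_combination b9
  have h02 : π 0 2 = 0 := by
    refine hz (ρ+2) _ (by linarith) ?_
    linear_combination 2*b7 + b8 + 2*γ*h22
  have h12 : π 1 2 = 0 := by
    refine hz 2 _ (by norm_num) ?_
    linear_combination b8 + ρ*h02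
  have h20 : π 2 0 = 0 := by
    refine hz (ρ+2*γ) _ (by linarith) ?_
    linear_combination 2*b3 + b6 + 2*h22
  have h21 : π 2 1 = 0 := by
    refine hz (2*γ) _ (by linarith) ?_
    linear_combination b6 + ρ*h20
  -- zeros in the partial system
  have q02 : p 0 2 = 0 := by
    refine hz (ρ+2) _ (by linarith) ?_
    linear_combination c3 + 2*c4
  have q12 : p 1 2 = 0 := by
    refine hz 2 _ (by norm_num) ?_
    linear_combination c3 + ρ*q02
  simp only [Fin.sum_univ_three] at hπs
  simp only [Fin.sum_univ_two, Fin.sum_univ_three] at hps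
  have hD : 0 < γ*(1+2*ρ+γ) + ρ*(ρ+γ)*(1+ρ+γ) := by positivity
  have kπ : π 1 1 * (γ*(1+2*ρ+γ) + ρ*(ρ+γ)*(1+ρ+γ)) = (ρ+γ)*ρ^2 := by
    apply key_sys ρ γ hρ hγ0 (π 0 0) (π 1 0) (π 0 1) (π 1 1)
    · linear_combination b1 + h02 + γ*h20
    · linear_combination b4 + γ*h21
    · linear_combination b5
    · linarith
  have kp : p 1 1 * (γ*(1+2*ρ+γ) + ρ*(ρ+γ)*(1+ρ+γ)) = (ρ+γ)*ρ^2 := by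
    apply key_sys ρ γ hρ hγ0 (p 0 0) (p 1 0) (p 0 1) (p 1 1)
    · linear_combination c1 + q02
    · linear_combination c6
    · linear_combination c5
    · linarith
  have heq : π 1 1 = p 1 1 := mul_right_cancel₀ (ne_of_gt hD) (kπ.trans kp.symm)
  constructor
  · simp only [Tfs, Tps]
    rw [h12, h21, h22, q12, heq]
    ring
  · simp only [Tfs]
    rw [h12, h21, h22]
    rw [div_lt_iff₀ (by linarith : (0:ℝ) < ρ + 1)]
    have hkey : π 1 1 * (ρ+1) < ρ := by
      nlinarith [kπ, hD, mul_pos hγ0 hρ, mul_pos (mul_pos hγ0 hρ) hρ,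
        mul_pos hγ0 (mul_pos hρ hρ)]
    have hfin : 0 < ρ * (ρ - π 1 1 * (ρ+1)) := mul_pos hρ (sub_pos.mpr hkey)
    have hr : (0+1)*ρ*(1-π 1 1-0-0-0)*(ρ+1) = ρ + ρ*(ρ - π 1 1*(ρ+1)) := by ring
    rw [hr]
    linarith
end

section
/- Let ρ > 0 and k ∈ (0,1), and set γ = kρ/(kρ + 1). Let π be any stationary distribution of the full flexibility system and p any stationary distribution of the partial flexibility system, both with parameters (ρ, k, γ). Then T_fs(π) < T_ps(p). (Hence the crossing value γ^r of the full and partial flexibility throughputs differs from γ^g = kρ/(kρ+1).) -/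
set_option maxHeartbeats 40000000
set_option maxRecDepth 100000
/-- at `γ = kρ/(kρ+1)` the full flexibility throughput is strictly below the
partial flexibility throughput (hence `γ^r ≠ γ^g`). -/
theorem stmt_12 (ρ k : ℝ) (hρ : 0 < ρ) (hk : k ∈ Set.Ioo (0:ℝ) 1)
    (π : Fin 3 → Fin 3 → ℝ) (p : Fin 2 → Fin 3 → ℝ)
    (hπ : FullStationary ρ k (k*ρ/(k*ρ + 1)) π)
    (hp : PartialStationary ρ k (k*ρ/(k*ρ + 1)) p) :
    Tfs ρ k π < Tps ρ k p := by
  obtain ⟨hk0, hk1⟩ := hk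
  have h1k : 0 < 1 - k := by linarith
  have hkr1 : (0:ℝ) < k*ρ + 1 := by positivity
  have hg : k*ρ/(k*ρ + 1) * (k*ρ+1) = k*ρ := div_mul_cancel₀ _ hkr1.ne'
  obtain ⟨hπpos, hπsum, h1, h2, h3, h4, h5, h6, h7, h8, h9⟩ := hπ
  obtain ⟨hppos, hpsum, q1, q2, q3, q4, q5, q6⟩ := hp
  simp only [Fin.sum_univ_three, Fin.sum_univ_two] at hπsum hpsum
  have GF : (2*ρ*k^2 + 6*ρ*k^3 + 4*ρ^2*k + 15*ρ^2*k^2 + 42*ρ^2*k^3 + 59*ρ^2*k^4 + 4*ρ^3*k + 47*ρ^3*k^2 + 148*ρ^3*k^3 + 261*ρ^3*k^4 + 220*ρ^3*k^5 + 1*ρ^4*k + 32*ρ^4*k^2 + 215*ρ^4*k^3 + 552*ρ^4*k^4 + 726*ρ^4*k^5 + 418*ρ^4*k^6 + 6*ρ^5*k^2 + 101*ρ^5*k^3 + 491*ρ^5*k^4 + 1032*ρ^5*k^5 + 1069*ρ^5*k^6 + 453*ρ^5*k^7 + 14*ρ^6*k^3 + 161*ρ^6*k^4 + 611*ρ^6*k^5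 + 1059*ρ^6*k^6 + 887*ρ^6*k^7 + 292*ρ^6*k^8 + 16*ρ^7*k^4 + 137*ρ^7*k^5 + 418*ρ^7*k^6 + 600*ρ^7*k^7 + 414*ρ^7*k^8 + 111*ρ^7*k^9 + 9*ρ^8*k^5 + 59*ρ^8*k^6 + 146*ρ^8*k^7 + 174*ρ^8*k^8 + 101*ρ^8*k^9 + 23*ρ^8*k^10 + 2*ρ^9*k^6 + 10*ρ^9*k^7 + 20*ρ^9*k^8 + 20*ρ^9*k^9 + 10*ρ^9*k^10 + 2*ρ^9*k^11) * (π 1 1 + π 2 1 + π 1 2 + π 2 2) = (2*ρ^2*k + 2*ρ^2*k^2 + 4*ρ^2*k^3 + 3*ρ^3*k + 24*ρ^3*k^2 + 37*ρ^3*k^3 + 36*ρ^3*k^4 + 12*ρ^3*k^5 + 1*ρ^4*k + 25*ρ^4*k^2 + 121*ρ^4*k^3 + 195*ρ^4*k^4 + 162*ρ^4*k^5 + 64*ρ^4*k^6 + 6*ρ^5*k^2 + 82*ρ^5*k^3 + 308*ρ^5*k^4 + 477*ρ^5*k^5 + 372*ρ^5*k^6 + 131*ρ^5*k^7 + 14*ρ^6*k^3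 + 136*ρ^6*k^4 + 429*ρ^6*k^5 + 619*ρ^6*k^6 + 445*ρ^6*k^7 + 133*ρ^6*k^8 + 16*ρ^7*k^4 + 121*ρ^7*k^5 + 330*ρ^7*k^6 + 432*ρ^7*k^7 + 278*ρ^7*k^8 + 71*ρ^7*k^9 + 9*ρ^8*k^5 + 55*ρ^8*k^6 + 130*ρ^8*k^7 + 150*ρ^8*k^8 + 85*ρ^8*k^9 + 19*ρ^8*k^10 + 2*ρ^9*k^6 + 10*ρ^9*k^7 + 20*ρ^9*k^8 + 20*ρ^9*k^9 + 10*ρ^9*k^10 + 2*ρ^9*k^11) := by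
    linear_combination (-((4*k + 2*ρ + 12*ρ*k + 34*ρ*k^2 + 12*ρ*k^3 + 1*ρ^2 + 20*ρ^2*k + 89*ρ^2*k^2 + 150*ρ^2*k^3 + 76*ρ^2*k^4 + 6*ρ^3*k + 76*ρ^3*k^2 + 275*ρ^3*k^3 + 380*ρ^3*k^4 + 183*ρ^3*k^5 + 15*ρ^4*k^2 + 147*ρ^4*k^3 + 445*ρ^4*k^4 + 525*ρ^4*k^5 + 212*ρ^4*k^6 + 20*ρ^5*k^3 + 155*ρ^5*k^4 + 383*ρ^5*k^5 + 373*ρ^5*k^6 + 125*ρ^5*k^7 + 14*ρ^6*k^4 + 82*ρ^6*k^5 + 158*ρ^6*k^6 + 126*ρ^6*k^7 + 36*ρ^6*k^8 + 4*ρ^7*k^5 + 16*ρ^7*k^6 + 24*ρ^7*k^7 + 16*ρ^7*k^8 + 4*ρ^7*k^9))*(k*ρ+1)) * h1 +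
      (-((4*k + 2*ρ + 10*ρ*k + 32*ρ*k^2 + 12*ρ*k^3 + 1*ρ^2 + 17*ρ^2*k + 68*ρ^2*k^2 + 125*ρ^2*k^3 + 73*ρ^2*k^4 + 5*ρ^3*k + 54*ρ^3*k^2 + 185*ρ^3*k^3 + 280*ρ^3*k^4 + 164*ρ^3*k^5 + 10*ρ^4*k^2 + 88*ρ^4*k^3 + 268*ρ^4*k^4 + 352*ρ^4*k^5 + 170*ρ^4*k^6 + 11*ρ^5*k^3 + 83*ρ^5*k^4 + 215*ρ^5*k^5 + 229*ρ^5*k^6 + 86*ρ^5*k^7 + 7*ρ^6*k^4 + 42*ρ^6*k^5 + 84*ρ^6*k^6 + 70*ρ^6*k^7 + 21*ρ^6*k^8 + 2*ρ^7*k^5 + 8*ρ^7*k^6 + 12*ρ^7*k^7 + 8*ρ^7*k^8 + 2*ρ^7*k^9))*(k*ρ+1)) * h2 +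
      (-((-2*ρ*k^2 + 6*ρ*k^3 + 1*ρ^2*k^2 + 10*ρ^2*k^3 + 41*ρ^2*k^4 + 4*ρ^3*k^2 + 31*ρ^3*k^3 + 94*ρ^3*k^4 + 103*ρ^3*k^5 + 1*ρ^4*k^2 + 23*ρ^4*k^3 + 111*ρ^4*k^4 + 201*ρ^4*k^5 + 120*ρ^4*k^6 + 4*ρ^5*k^3 + 45*ρ^5*k^4 + 143*ρ^5*k^5 + 171*ρ^5*k^6 + 69*ρ^5*k^7 + 5*ρ^6*k^4 + 34*ρ^6*k^5 + 72*ρ^6*k^6 + 62*ρ^6*k^7 + 19*ρ^6*k^8 + 2*ρ^7*k^5 + 8*ρ^7*k^6 + 12*ρ^7*k^7 + 8*ρ^7*k^8 + 2*ρ^7*k^9))*(k*ρ+1)) * h3 +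
      (-((2*k - 2*k^2 + 2*ρ + 5*ρ*k + 8*ρ*k^2 - 11*ρ*k^3 + 1*ρ^2 + 15*ρ^2*k + 32*ρ^2*k^2 + 15*ρ^2*k^3 - 11*ρ^2*k^4 + 5*ρ^3*k + 44*ρ^3*k^2 + 90*ρ^3*k^3 + 64*ρ^3*k^4 + 29*ρ^3*k^5 + 10*ρ^4*k^2 + 70*ρ^4*k^3 + 154*ρ^4*k^4 + 154*ρ^4*k^5 + 68*ρ^4*k^6 + 11*ρ^5*k^3 + 69*ρ^5*k^4 + 153*ρ^5*k^5 + 147*ρ^5*k^6 + 52*ρ^5*k^7 + 7*ρ^6*k^4 + 38*ρ^6*k^5 + 72*ρ^6*k^6 + 58*ρ^6*k^7 + 17*ρ^6*k^8 + 2*ρ^7*k^5 + 8*ρ^7*k^6 + 12*ρ^7*k^7 + 8*ρ^7*k^8 + 2*ρ^7*k^9))*(k*ρ+1)) * h4 +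
      (-((2*k - 2*k^2 + 2*ρ + 5*ρ*k + 8*ρ*k^2 - 15*ρ*k^3 + 1*ρ^2 + 13*ρ^2*k + 24*ρ^2*k^2 + 1*ρ^2*k^3 - 39*ρ^2*k^4 + 4*ρ^3*k + 27*ρ^3*k^2 + 31*ρ^3*k^3 - 23*ρ^3*k^4 - 39*ρ^3*k^5 + 5*ρ^4*k^2 + 20*ρ^4*k^3 + 10*ρ^4*k^4 - 20*ρ^4*k^5 - 15*ρ^4*k^6 + 2*ρ^5*k^3 + 4*ρ^5*k^4 - 4*ρ^5*k^6 - 2*ρ^5*k^7))*(k*ρ+1)) * h5 +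
      (-((-4*k^2 - 4*ρ*k - 16*ρ*k^2 - 32*ρ*k^3 - 4*ρ^2*k - 39*ρ^2*k^2 - 100*ρ^2*k^3 - 89*ρ^2*k^4 - 1*ρ^3*k - 23*ρ^3*k^2 - 118*ρ^3*k^3 - 203*ρ^3*k^4 - 111*ρ^3*k^5 - 4*ρ^4*k^2 - 45*ρ^4*k^3 - 145*ρ^4*k^4 - 171*ρ^4*k^5 - 67*ρ^4*k^6 - 5*ρ^5*k^3 - 34*ρ^5*k^4 - 72*ρ^5*k^5 - 62*ρ^5*k^6 - 19*ρ^5*k^7 - 2*ρ^6*k^4 - 8*ρ^6*k^5 - 12*ρ^6*k^6 - 8*ρ^6*k^7 - 2*ρ^6*k^8))*(k*ρ+1)) * h6 +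
      (-((4*k + 2*ρ + 12*ρ*k + 30*ρ*k^2 + 12*ρ*k^3 + 1*ρ^2 + 19*ρ^2*k + 79*ρ^2*k^2 + 121*ρ^2*k^3 + 64*ρ^2*k^4 + 6*ρ^3*k + 67*ρ^3*k^2 + 215*ρ^3*k^3 + 269*ρ^3*k^4 + 131*ρ^3*k^5 + 14*ρ^4*k^2 + 115*ρ^4*k^3 + 301*ρ^4*k^4 + 325*ρ^4*k^5 + 133*ρ^4*k^6 + 16*ρ^5*k^3 + 103*ρ^5*k^4 + 225*ρ^5*k^5 + 209*ρ^5*k^6 + 71*ρ^5*k^7 + 9*ρ^6*k^4 + 46*ρ^6*k^5 + 84*ρ^6*k^6 + 66*ρ^6*k^7 + 19*ρ^6*k^8 + 2*ρ^7*k^5 + 8*ρ^7*k^6 + 12*ρ^7*k^7 + 8*ρ^7*k^8 + 2*ρ^7*k^9))*(k*ρ+1)) * h7 +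
      (-((4*k + 2*ρ + 11*ρ*k + 34*ρ*k^2 + 9*ρ*k^3 + 1*ρ^2 + 19*ρ^2*k + 78*ρ^2*k^2 + 135*ρ^2*k^3 + 51*ρ^2*k^4 + 6*ρ^3*k + 67*ρ^3*k^2 + 218*ρ^3*k^3 + 285*ρ^3*k^4 + 112*ρ^3*k^5 + 14*ρ^4*k^2 + 115*ρ^4*k^3 + 306*ρ^4*k^4 + 331*ρ^4*k^5 + 122*ρ^4*k^6 + 16*ρ^5*k^3 + 103*ρ^5*k^4 + 227*ρ^5*k^5 + 209*ρ^5*k^6 + 69*ρ^5*k^7 + 9*ρ^6*k^4 + 46*ρ^6*k^5 + 84*ρ^6*k^6 + 66*ρ^6*k^7 + 19*ρ^6*k^8 + 2*ρ^7*k^5 + 8*ρ^7*k^6 + 12*ρ^7*k^7 + 8*ρ^7*k^8 + 2*ρ^7*k^9))) * h8 +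
      (((4*k + 2*ρ + 12*ρ*k + 34*ρ*k^2 + 12*ρ*k^3 + 1*ρ^2 + 20*ρ^2*k + 89*ρ^2*k^2 + 150*ρ^2*k^3 + 76*ρ^2*k^4 + 6*ρ^3*k + 76*ρ^3*k^2 + 275*ρ^3*k^3 + 380*ρ^3*k^4 + 183*ρ^3*k^5 + 15*ρ^4*k^2 + 147*ρ^4*k^3 + 445*ρ^4*k^4 + 525*ρ^4*k^5 + 212*ρ^4*k^6 + 20*ρ^5*k^3 + 155*ρ^5*k^4 + 383*ρ^5*k^5 + 373*ρ^5*k^6 + 125*ρ^5*k^7 + 14*ρ^6*k^4 + 82*ρ^6*k^5 + 158*ρ^6*k^6 + 126*ρ^6*k^7 + 36*ρ^6*k^8 + 4*ρ^7*k^5 + 16*ρ^7*k^6 + 24*ρ^7*k^7 + 16*ρ^7*k^8 + 4*ρ^7*k^9))*(-(π 0 1 + π 2 0)) + ((4*k + 2*ρ + 10*ρ*k + 32*ρ*k^2 + 12*ρ*k^3 + 1*ρ^2 + 17*ρ^2*k + 68*ρ^2*k^2 + 125*ρ^2*k^3 + 73*ρ^2*k^4 + 5*ρ^3*k + 54*ρ^3*k^2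 + 185*ρ^3*k^3 + 280*ρ^3*k^4 + 164*ρ^3*k^5 + 10*ρ^4*k^2 + 88*ρ^4*k^3 + 268*ρ^4*k^4 + 352*ρ^4*k^5 + 170*ρ^4*k^6 + 11*ρ^5*k^3 + 83*ρ^5*k^4 + 215*ρ^5*k^5 + 229*ρ^5*k^6 + 86*ρ^5*k^7 + 7*ρ^6*k^4 + 42*ρ^6*k^5 + 84*ρ^6*k^6 + 70*ρ^6*k^7 + 21*ρ^6*k^8 + 2*ρ^7*k^5 + 8*ρ^7*k^6 + 12*ρ^7*k^7 + 8*ρ^7*k^8 + 2*ρ^7*k^9))*(-(π 1 1)) + ((-2*ρ*k^2 + 6*ρ*k^3 + 1*ρ^2*k^2 + 10*ρ^2*k^3 + 41*ρ^2*k^4 + 4*ρ^3*k^2 + 31*ρ^3*k^3 + 94*ρ^3*k^4 + 103*ρ^3*k^5 + 1*ρ^4*k^2 + 23*ρ^4*k^3 + 111*ρ^4*k^4 + 201*ρ^4*k^5 + 120*ρ^4*k^6 + 4*ρ^5*k^3 + 45*ρ^5*k^4 + 143*ρ^5*k^5 + 171*ρ^5*k^6 + 69*ρ^5*k^7 + 5*ρ^6*k^4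 + 34*ρ^6*k^5 + 72*ρ^6*k^6 + 62*ρ^6*k^7 + 19*ρ^6*k^8 + 2*ρ^7*k^5 + 8*ρ^7*k^6 + 12*ρ^7*k^7 + 8*ρ^7*k^8 + 2*ρ^7*k^9))*(π 2 0 - π 2 1) + ((2*k - 2*k^2 + 2*ρ + 5*ρ*k + 8*ρ*k^2 - 11*ρ*k^3 + 1*ρ^2 + 15*ρ^2*k + 32*ρ^2*k^2 + 15*ρ^2*k^3 - 11*ρ^2*k^4 + 5*ρ^3*k + 44*ρ^3*k^2 + 90*ρ^3*k^3 + 64*ρ^3*k^4 + 29*ρ^3*k^5 + 10*ρ^4*k^2 + 70*ρ^4*k^3 + 154*ρ^4*k^4 + 154*ρ^4*k^5 + 68*ρ^4*k^6 + 11*ρ^5*k^3 + 69*ρ^5*k^4 + 153*ρ^5*k^5 + 147*ρ^5*k^6 + 52*ρ^5*k^7 + 7*ρ^6*k^4 + 38*ρ^6*k^5 + 72*ρ^6*k^6 + 58*ρ^6*k^7 + 17*ρ^6*k^8 + 2*ρ^7*k^5 + 8*ρ^7*k^6 + 12*ρ^7*k^7 + 8*ρ^7*k^8 + 2*ρ^7*k^9))*(π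 0 1 - π 2 1) + ((2*k - 2*k^2 + 2*ρ + 5*ρ*k + 8*ρ*k^2 - 15*ρ*k^3 + 1*ρ^2 + 13*ρ^2*k + 24*ρ^2*k^2 + 1*ρ^2*k^3 - 39*ρ^2*k^4 + 4*ρ^3*k + 27*ρ^3*k^2 + 31*ρ^3*k^3 - 23*ρ^3*k^4 - 39*ρ^3*k^5 + 5*ρ^4*k^2 + 20*ρ^4*k^3 + 10*ρ^4*k^4 - 20*ρ^4*k^5 - 15*ρ^4*k^6 + 2*ρ^5*k^3 + 4*ρ^5*k^4 - 4*ρ^5*k^6 - 2*ρ^5*k^7))*(π 1 1) + ((-4*k^2 - 4*ρ*k - 16*ρ*k^2 - 32*ρ*k^3 - 4*ρ^2*k - 39*ρ^2*k^2 - 100*ρ^2*k^3 - 89*ρ^2*k^4 - 1*ρ^3*k - 23*ρ^3*k^2 - 118*ρ^3*k^3 - 203*ρ^3*k^4 - 111*ρ^3*k^5 - 4*ρ^4*k^2 - 45*ρ^4*k^3 - 145*ρ^4*k^4 - 171*ρ^4*k^5 - 67*ρ^4*k^6 - 5*ρ^5*k^3 - 34*ρ^5*k^4 - 72*ρ^5*k^5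 - 62*ρ^5*k^6 - 19*ρ^5*k^7 - 2*ρ^6*k^4 - 8*ρ^6*k^5 - 12*ρ^6*k^6 - 8*ρ^6*k^7 - 2*ρ^6*k^8))*(2*π 2 1) + ((4*k + 2*ρ + 12*ρ*k + 30*ρ*k^2 + 12*ρ*k^3 + 1*ρ^2 + 19*ρ^2*k + 79*ρ^2*k^2 + 121*ρ^2*k^3 + 64*ρ^2*k^4 + 6*ρ^3*k + 67*ρ^3*k^2 + 215*ρ^3*k^3 + 269*ρ^3*k^4 + 131*ρ^3*k^5 + 14*ρ^4*k^2 + 115*ρ^4*k^3 + 301*ρ^4*k^4 + 325*ρ^4*k^5 + 133*ρ^4*k^6 + 16*ρ^5*k^3 + 103*ρ^5*k^4 + 225*ρ^5*k^5 + 209*ρ^5*k^6 + 71*ρ^5*k^7 + 9*ρ^6*k^4 + 46*ρ^6*k^5 + 84*ρ^6*k^6 + 66*ρ^6*k^7 + 19*ρ^6*k^8 + 2*ρ^7*k^5 + 8*ρ^7*k^6 + 12*ρ^7*k^7 + 8*ρ^7*k^8 + 2*ρ^7*k^9))*(-(π 2 2))) * hg +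
      (-((-2*ρ^2*k - 2*ρ^2*k^2 - 4*ρ^2*k^3 - 3*ρ^3*k - 24*ρ^3*k^2 - 37*ρ^3*k^3 - 36*ρ^3*k^4 - 12*ρ^3*k^5 - 1*ρ^4*k - 25*ρ^4*k^2 - 121*ρ^4*k^3 - 195*ρ^4*k^4 - 162*ρ^4*k^5 - 64*ρ^4*k^6 - 6*ρ^5*k^2 - 82*ρ^5*k^3 - 308*ρ^5*k^4 - 477*ρ^5*k^5 - 372*ρ^5*k^6 - 131*ρ^5*k^7 - 14*ρ^6*k^3 - 136*ρ^6*k^4 - 429*ρ^6*k^5 - 619*ρ^6*k^6 - 445*ρ^6*k^7 - 133*ρ^6*k^8 - 16*ρ^7*k^4 - 121*ρ^7*k^5 - 330*ρ^7*k^6 - 432*ρ^7*k^7 - 278*ρ^7*k^8 - 71*ρ^7*k^9 - 9*ρ^8*k^5 - 55*ρ^8*k^6 - 130*ρ^8*k^7 - 150*ρ^8*k^8 - 85*ρ^8*k^9 - 19*ρ^8*k^10 - 2*ρ^9*k^6 - 10*ρ^9*k^7 - 20*ρ^9*k^8 - 20*ρ^9*k^9 - 10*ρ^9*k^10 - 2*ρ^9*k^11)))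 * hπsum
  have GP1 : (2*ρ*k + 2*ρ^2 + 7*ρ^2*k + 7*ρ^2*k^2 + 3*ρ^3 + 12*ρ^3*k + 19*ρ^3*k^2 + 7*ρ^3*k^3 + 1*ρ^4 + 9*ρ^4*k + 19*ρ^4*k^2 + 15*ρ^4*k^3 + 2*ρ^4*k^4 + 2*ρ^5*k + 8*ρ^5*k^2 + 10*ρ^5*k^3 + 3*ρ^5*k^4 + 1*ρ^6*k^2 + 2*ρ^6*k^3 + 1*ρ^6*k^4) * (p 1 1 + p 1 2) = (2*ρ^3 + 2*ρ^3*k + 2*ρ^3*k^2 + 1*ρ^4 + 6*ρ^4*k + 7*ρ^4*k^2 + 5*ρ^4*k^3 + 2*ρ^5*k + 6*ρ^5*k^2 + 7*ρ^5*k^3 + 2*ρ^5*k^4 + 1*ρ^6*k^2 + 2*ρ^6*k^3 + 1*ρ^6*k^4) := by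
    linear_combination (-((2*ρ + 3*ρ^2 + 3*ρ^2*k + 1*ρ^3 + 4*ρ^3*k + 1*ρ^4*k))*(k*ρ+1)) * q1 +
      (-((2*ρ + 1*ρ^2 + 1*ρ^2*k - 1*ρ^2*k^2 - 3*ρ^3*k^2 - 2*ρ^3*k^3 - 1*ρ^4*k^2 - 1*ρ^4*k^3))*(k*ρ+1)) * q2 +
      (-((2*ρ - 1*ρ*k + 1*ρ^2 - 4*ρ^2*k^2 - 2*ρ^3*k - 9*ρ^3*k^2 - 5*ρ^3*k^3 - 1*ρ^4*k - 6*ρ^4*k^2 - 7*ρ^4*k^3 - 2*ρ^4*k^4 - 1*ρ^5*k^2 - 2*ρ^5*k^3 - 1*ρ^5*k^4))) * q3 +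
      (-((2*ρ + 3*ρ^2 + 4*ρ^2*k + 1*ρ^3 + 5*ρ^3*k + 1*ρ^3*k^2 + 1*ρ^4*k + 1*ρ^4*k^2))) * q4 +
      (-((-2*ρ*k - 2*ρ^2 - 5*ρ^2*k - 3*ρ^2*k^2 - 1*ρ^3 - 5*ρ^3*k - 6*ρ^3*k^2 - 2*ρ^3*k^3 - 1*ρ^4*k - 2*ρ^4*k^2 - 1*ρ^4*k^3))*(k*ρ+1)) * q5 +
      (((2*ρ + 3*ρ^2 + 3*ρ^2*k + 1*ρ^3 + 4*ρ^3*k + 1*ρ^4*k))*(-(p 0 1)) + ((2*ρ + 1*ρ^2 + 1*ρ^2*k - 1*ρ^2*k^2 - 3*ρ^3*k^2 - 2*ρ^3*k^3 - 1*ρ^4*k^2 - 1*ρ^4*k^3))*(-(p 1 1)) + ((-2*ρ*k - 2*ρ^2 - 5*ρ^2*k - 3*ρ^2*k^2 - 1*ρ^3 - 5*ρ^3*k - 6*ρ^3*k^2 - 2*ρ^3*k^3 - 1*ρ^4*k - 2*ρ^4*k^2 - 1*ρ^4*k^3))*(p 1 1)) * hg +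
      (-((-2*ρ^3 - 2*ρ^3*k - 2*ρ^3*k^2 - 1*ρ^4 - 6*ρ^4*k - 7*ρ^4*k^2 - 5*ρ^4*k^3 - 2*ρ^5*k - 6*ρ^5*k^2 - 7*ρ^5*k^3 - 2*ρ^5*k^4 - 1*ρ^6*k^2 - 2*ρ^6*k^3 - 1*ρ^6*k^4))) * hpsum
  have GP2 : (2*ρ*k + 2*ρ^2 + 7*ρ^2*k + 7*ρ^2*k^2 + 3*ρ^3 + 12*ρ^3*k + 19*ρ^3*k^2 + 7*ρ^3*k^3 + 1*ρ^4 + 9*ρ^4*k + 19*ρ^4*k^2 + 15*ρ^4*k^3 + 2*ρ^4*k^4 + 2*ρ^5*k + 8*ρ^5*k^2 + 10*ρ^5*k^3 + 3*ρ^5*k^4 + 1*ρ^6*k^2 + 2*ρ^6*k^3 + 1*ρ^6*k^4) * (p 0 1 + p 0 2) = (2*ρ^2 + 2*ρ^2*k^2 + 1*ρ^3 + 5*ρ^3*k + 5*ρ^3*k^2 + 5*ρ^3*k^3 + 2*ρ^4*k + 5*ρ^4*k^2 + 7*ρ^4*k^3 + 2*ρ^4*k^4 + 1*ρ^5*k^2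 + 2*ρ^5*k^3 + 1*ρ^5*k^4) := by
    linear_combination (-((2 + 5*ρ + 5*ρ*k + 4*ρ^2 + 9*ρ^2*k + 2*ρ^2*k^2 + 1*ρ^3 + 5*ρ^3*k + 3*ρ^3*k^2 + 1*ρ^4*k + 1*ρ^4*k^2))*(k*ρ+1)) * q1 +
      (-((2 + 3*ρ + 5*ρ*k + 3*ρ^2 + 7*ρ^2*k + 3*ρ^2*k^2 + 1*ρ^3 + 5*ρ^3*k + 6*ρ^3*k^2 + 2*ρ^3*k^3 + 1*ρ^4*k + 2*ρ^4*k^2 + 1*ρ^4*k^3))*(k*ρ+1)) * q2 +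
      (-((2 + 4*ρ + 6*ρ*k + 4*ρ^2 + 9*ρ^2*k + 6*ρ^2*k^2 + 1*ρ^3 + 8*ρ^3*k + 10*ρ^3*k^2 + 5*ρ^3*k^3 + 2*ρ^4*k + 6*ρ^4*k^2 + 7*ρ^4*k^3 + 2*ρ^4*k^4 + 1*ρ^5*k^2 + 2*ρ^5*k^3 + 1*ρ^5*k^4))) * q3 +
      (-((2 + 5*ρ + 5*ρ*k + 3*ρ^2 + 8*ρ^2*k + 2*ρ^2*k^2 + 3*ρ^3*k + 2*ρ^3*k^2))) * q4 +
      (-((2*ρ*k + 2*ρ^2 + 3*ρ^2*k + 3*ρ^2*k^2 + 1*ρ^3 + 4*ρ^3*k + 6*ρ^3*k^2 + 2*ρ^3*k^3 + 1*ρ^4*k + 2*ρ^4*k^2 + 1*ρ^4*k^3))*(k*ρ+1)) * q5 +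
      (((2 + 5*ρ + 5*ρ*k + 4*ρ^2 + 9*ρ^2*k + 2*ρ^2*k^2 + 1*ρ^3 + 5*ρ^3*k + 3*ρ^3*k^2 + 1*ρ^4*k + 1*ρ^4*k^2))*(-(p 0 1)) + ((2 + 3*ρ + 5*ρ*k + 3*ρ^2 + 7*ρ^2*k + 3*ρ^2*k^2 + 1*ρ^3 + 5*ρ^3*k + 6*ρ^3*k^2 + 2*ρ^3*k^3 + 1*ρ^4*k + 2*ρ^4*k^2 + 1*ρ^4*k^3))*(-(p 1 1)) + ((2*ρ*k + 2*ρ^2 + 3*ρ^2*k + 3*ρ^2*k^2 + 1*ρ^3 + 4*ρ^3*k + 6*ρ^3*k^2 + 2*ρ^3*k^3 + 1*ρ^4*k + 2*ρ^4*k^2 + 1*ρ^4*k^3))*(p 1 1)) * hg +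
      (-((-2*ρ^2 - 2*ρ^2*k^2 - 1*ρ^3 - 5*ρ^3*k - 5*ρ^3*k^2 - 5*ρ^3*k^3 - 2*ρ^4*k - 5*ρ^4*k^2 - 7*ρ^4*k^3 - 2*ρ^4*k^4 - 1*ρ^5*k^2 - 2*ρ^5*k^3 - 1*ρ^5*k^4))) * hpsum
  have haF : (0:ℝ) < (2*ρ*k^2 + 6*ρ*k^3 + 4*ρ^2*k + 15*ρ^2*k^2 + 42*ρ^2*k^3 + 59*ρ^2*k^4 + 4*ρ^3*k + 47*ρ^3*k^2 + 148*ρ^3*k^3 + 261*ρ^3*k^4 + 220*ρ^3*k^5 + 1*ρ^4*k + 32*ρ^4*k^2 + 215*ρ^4*k^3 + 552*ρ^4*k^4 + 726*ρ^4*k^5 + 418*ρ^4*k^6 + 6*ρ^5*k^2 + 101*ρ^5*k^3 + 491*ρ^5*k^4 + 1032*ρ^5*k^5 + 1069*ρ^5*k^6 + 453*ρ^5*k^7 + 14*ρ^6*k^3 + 161*ρ^6*k^4 + 611*ρ^6*k^5 + 1059*ρ^6*k^6 + 887*ρ^6*k^7 + 292*ρ^6*k^8 + 16*ρ^7*k^4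 + 137*ρ^7*k^5 + 418*ρ^7*k^6 + 600*ρ^7*k^7 + 414*ρ^7*k^8 + 111*ρ^7*k^9 + 9*ρ^8*k^5 + 59*ρ^8*k^6 + 146*ρ^8*k^7 + 174*ρ^8*k^8 + 101*ρ^8*k^9 + 23*ρ^8*k^10 + 2*ρ^9*k^6 + 10*ρ^9*k^7 + 20*ρ^9*k^8 + 20*ρ^9*k^9 + 10*ρ^9*k^10 + 2*ρ^9*k^11) := by positivity
  have haP : (0:ℝ) < (2*ρ*k + 2*ρ^2 + 7*ρ^2*k + 7*ρ^2*k^2 + 3*ρ^3 + 12*ρ^3*k + 19*ρ^3*k^2 + 7*ρ^3*k^3 + 1*ρ^4 + 9*ρ^4*k + 19*ρ^4*k^2 + 15*ρ^4*k^3 + 2*ρ^4*k^4 + 2*ρ^5*k + 8*ρ^5*k^2 + 10*ρ^5*k^3 + 3*ρ^5*k^4 + 1*ρ^6*k^2 + 2*ρ^6*k^3 + 1*ρ^6*k^4) := by positivity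
  have hnum : (0:ℝ) < ρ^4 * k * (1-k) * (k*ρ+1)^2 * (4*k + 8*k^2 + 8*k^3 + 12*k^4 + 4*ρ + 20*ρ*k + 68*ρ*k^2 + 120*ρ*k^3 + 120*ρ*k^4 + 100*ρ*k^5 + 4*ρ^2 + 49*ρ^2*k + 196*ρ^2*k^2 + 457*ρ^2*k^3 + 667*ρ^2*k^4 + 608*ρ^2*k^5 + 323*ρ^2*k^6 + 1*ρ^3 + 32*ρ^3*k + 233*ρ^3*k^2 + 765*ρ^3*k^3 + 1489*ρ^3*k^4 + 1855*ρ^3*k^5 + 1423*ρ^3*k^6 + 514*ρ^3*k^7 + 6*ρ^4*k + 102*ρ^4*k^2 + 558*ρ^4*k^3 + 1555*ρ^4*k^4 + 2622*ρ^4*k^5 + 2771*ρ^4*k^6 + 1692*ρ^4*k^7 + 430*ρ^4*k^8 + 14*ρ^5*k^2 + 166*ρ^5*k^3 + 738*ρ^5*k^4 + 1768*ρ^5*k^5 + 2555*ρ^5*k^6 + 2225*ρ^5*k^7 + 1045*ρ^5*k^8 + 193*ρ^5*k^9 + 16*ρ^6*k^3 + 146*ρ^6*k^4 + 543*ρ^6*k^5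 + 1106*ρ^6*k^6 + 1328*ρ^6*k^7 + 920*ρ^6*k^8 + 329*ρ^6*k^9 + 44*ρ^6*k^10 + 9*ρ^7*k^4 + 66*ρ^7*k^5 + 205*ρ^7*k^6 + 344*ρ^7*k^7 + 331*ρ^7*k^8 + 178*ρ^7*k^9 + 47*ρ^7*k^10 + 4*ρ^7*k^11 + 2*ρ^8*k^5 + 12*ρ^8*k^6 + 30*ρ^8*k^7 + 40*ρ^8*k^8 + 30*ρ^8*k^9 + 12*ρ^8*k^10 + 2*ρ^8*k^11) := by positivity
  have hD : (0:ℝ) < (2*ρ*k^2 + 6*ρ*k^3 + 4*ρ^2*k + 15*ρ^2*k^2 + 42*ρ^2*k^3 + 59*ρ^2*k^4 + 4*ρ^3*k + 47*ρ^3*k^2 + 148*ρ^3*k^3 + 261*ρ^3*k^4 + 220*ρ^3*k^5 + 1*ρ^4*k + 32*ρ^4*k^2 + 215*ρ^4*k^3 + 552*ρ^4*k^4 + 726*ρ^4*k^5 + 418*ρ^4*k^6 + 6*ρ^5*k^2 + 101*ρ^5*k^3 + 491*ρ^5*k^4 + 1032*ρ^5*k^5 + 1069*ρ^5*k^6 +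 453*ρ^5*k^7 + 14*ρ^6*k^3 + 161*ρ^6*k^4 + 611*ρ^6*k^5 + 1059*ρ^6*k^6 + 887*ρ^6*k^7 + 292*ρ^6*k^8 + 16*ρ^7*k^4 + 137*ρ^7*k^5 + 418*ρ^7*k^6 + 600*ρ^7*k^7 + 414*ρ^7*k^8 + 111*ρ^7*k^9 + 9*ρ^8*k^5 + 59*ρ^8*k^6 + 146*ρ^8*k^7 + 174*ρ^8*k^8 + 101*ρ^8*k^9 + 23*ρ^8*k^10 + 2*ρ^9*k^6 + 10*ρ^9*k^7 + 20*ρ^9*k^8 + 20*ρ^9*k^9 + 10*ρ^9*k^10 + 2*ρ^9*k^11) * ((2*ρ*k + 2*ρ^2 + 7*ρ^2*k + 7*ρ^2*k^2 + 3*ρ^3 + 12*ρ^3*k + 19*ρ^3*k^2 + 7*ρ^3*k^3 + 1*ρ^4 + 9*ρ^4*k + 19*ρ^4*k^2 + 15*ρ^4*k^3 + 2*ρ^4*k^4 + 2*ρ^5*k + 8*ρ^5*k^2 + 10*ρ^5*k^3 + 3*ρ^5*k^4 + 1*ρ^6*k^2 + 2*ρ^6*k^3 + 1*ρ^6*k^4))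 := mul_pos haF haP
  have key : (Tps ρ k p - Tfs ρ k π) * ((2*ρ*k^2 + 6*ρ*k^3 + 4*ρ^2*k + 15*ρ^2*k^2 + 42*ρ^2*k^3 + 59*ρ^2*k^4 + 4*ρ^3*k + 47*ρ^3*k^2 + 148*ρ^3*k^3 + 261*ρ^3*k^4 + 220*ρ^3*k^5 + 1*ρ^4*k + 32*ρ^4*k^2 + 215*ρ^4*k^3 + 552*ρ^4*k^4 + 726*ρ^4*k^5 + 418*ρ^4*k^6 + 6*ρ^5*k^2 + 101*ρ^5*k^3 + 491*ρ^5*k^4 + 1032*ρ^5*k^5 + 1069*ρ^5*k^6 + 453*ρ^5*k^7 + 14*ρ^6*k^3 + 161*ρ^6*k^4 + 611*ρ^6*k^5 + 1059*ρ^6*k^6 + 887*ρ^6*k^7 + 292*ρ^6*k^8 + 16*ρ^7*k^4 + 137*ρ^7*k^5 + 418*ρ^7*k^6 + 600*ρ^7*k^7 + 414*ρ^7*k^8 + 111*ρ^7*k^9 + 9*ρ^8*k^5 + 59*ρ^8*k^6 + 146*ρ^8*k^7 + 174*ρ^8*k^8 + 101*ρ^8*k^9 + 23*ρ^8*k^10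 + 2*ρ^9*k^6 + 10*ρ^9*k^7 + 20*ρ^9*k^8 + 20*ρ^9*k^9 + 10*ρ^9*k^10 + 2*ρ^9*k^11) * ((2*ρ*k + 2*ρ^2 + 7*ρ^2*k + 7*ρ^2*k^2 + 3*ρ^3 + 12*ρ^3*k + 19*ρ^3*k^2 + 7*ρ^3*k^3 + 1*ρ^4 + 9*ρ^4*k + 19*ρ^4*k^2 + 15*ρ^4*k^3 + 2*ρ^4*k^4 + 2*ρ^5*k + 8*ρ^5*k^2 + 10*ρ^5*k^3 + 3*ρ^5*k^4 + 1*ρ^6*k^2 + 2*ρ^6*k^3 + 1*ρ^6*k^4)))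
      = ρ^4 * k * (1-k) * (k*ρ+1)^2 * (4*k + 8*k^2 + 8*k^3 + 12*k^4 + 4*ρ + 20*ρ*k + 68*ρ*k^2 + 120*ρ*k^3 + 120*ρ*k^4 + 100*ρ*k^5 + 4*ρ^2 + 49*ρ^2*k + 196*ρ^2*k^2 + 457*ρ^2*k^3 + 667*ρ^2*k^4 + 608*ρ^2*k^5 + 323*ρ^2*k^6 + 1*ρ^3 + 32*ρ^3*k + 233*ρ^3*k^2 + 765*ρ^3*k^3 + 1489*ρ^3*k^4 + 1855*ρ^3*k^5 + 1423*ρ^3*k^6 + 514*ρ^3*k^7 + 6*ρ^4*k + 102*ρ^4*k^2 + 558*ρ^4*k^3 + 1555*ρ^4*k^4 + 2622*ρ^4*k^5 + 2771*ρ^4*k^6 + 1692*ρ^4*k^7 + 430*ρ^4*k^8 + 14*ρ^5*k^2 + 166*ρ^5*k^3 + 738*ρ^5*k^4 + 1768*ρ^5*k^5 + 2555*ρ^5*k^6 + 2225*ρ^5*k^7 + 1045*ρ^5*k^8 + 193*ρ^5*k^9 + 16*ρ^6*k^3 + 146*ρ^6*k^4 + 543*ρ^6*k^5 + 1106*ρ^6*k^6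 + 1328*ρ^6*k^7 + 920*ρ^6*k^8 + 329*ρ^6*k^9 + 44*ρ^6*k^10 + 9*ρ^7*k^4 + 66*ρ^7*k^5 + 205*ρ^7*k^6 + 344*ρ^7*k^7 + 331*ρ^7*k^8 + 178*ρ^7*k^9 + 47*ρ^7*k^10 + 4*ρ^7*k^11 + 2*ρ^8*k^5 + 12*ρ^8*k^6 + 30*ρ^8*k^7 + 40*ρ^8*k^8 + 30*ρ^8*k^9 + 12*ρ^8*k^10 + 2*ρ^8*k^11) := by
    simp only [Tps, Tfs]
    linear_combination ((k+1)*ρ*((2*ρ*k + 2*ρ^2 + 7*ρ^2*k + 7*ρ^2*k^2 + 3*ρ^3 + 12*ρ^3*k + 19*ρ^3*k^2 + 7*ρ^3*k^3 + 1*ρ^4 + 9*ρ^4*k + 19*ρ^4*k^2 + 15*ρ^4*k^3 + 2*ρ^4*k^4 + 2*ρ^5*k + 8*ρ^5*k^2 + 10*ρ^5*k^3 + 3*ρ^5*k^4 + 1*ρ^6*k^2 + 2*ρ^6*k^3 + 1*ρ^6*k^4))) * GF - ((1+k)*ρ*((2*ρ*k^2 + 6*ρ*k^3 + 4*ρ^2*k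 + 15*ρ^2*k^2 + 42*ρ^2*k^3 + 59*ρ^2*k^4 + 4*ρ^3*k + 47*ρ^3*k^2 + 148*ρ^3*k^3 + 261*ρ^3*k^4 + 220*ρ^3*k^5 + 1*ρ^4*k + 32*ρ^4*k^2 + 215*ρ^4*k^3 + 552*ρ^4*k^4 + 726*ρ^4*k^5 + 418*ρ^4*k^6 + 6*ρ^5*k^2 + 101*ρ^5*k^3 + 491*ρ^5*k^4 + 1032*ρ^5*k^5 + 1069*ρ^5*k^6 + 453*ρ^5*k^7 + 14*ρ^6*k^3 + 161*ρ^6*k^4 + 611*ρ^6*k^5 + 1059*ρ^6*k^6 + 887*ρ^6*k^7 + 292*ρ^6*k^8 + 16*ρ^7*k^4 + 137*ρ^7*k^5 + 418*ρ^7*k^6 + 600*ρ^7*k^7 + 414*ρ^7*k^8 + 111*ρ^7*k^9 + 9*ρ^8*k^5 + 59*ρ^8*k^6 + 146*ρ^8*k^7 + 174*ρ^8*k^8 + 101*ρ^8*k^9 + 23*ρ^8*k^10 + 2*ρ^9*k^6 + 10*ρ^9*k^7 + 20*ρ^9*k^8 + 20*ρ^9*k^9 + 10*ρ^9*k^10 +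 2*ρ^9*k^11))) * GP1 - (k*ρ*((2*ρ*k^2 + 6*ρ*k^3 + 4*ρ^2*k + 15*ρ^2*k^2 + 42*ρ^2*k^3 + 59*ρ^2*k^4 + 4*ρ^3*k + 47*ρ^3*k^2 + 148*ρ^3*k^3 + 261*ρ^3*k^4 + 220*ρ^3*k^5 + 1*ρ^4*k + 32*ρ^4*k^2 + 215*ρ^4*k^3 + 552*ρ^4*k^4 + 726*ρ^4*k^5 + 418*ρ^4*k^6 + 6*ρ^5*k^2 + 101*ρ^5*k^3 + 491*ρ^5*k^4 + 1032*ρ^5*k^5 + 1069*ρ^5*k^6 + 453*ρ^5*k^7 + 14*ρ^6*k^3 + 161*ρ^6*k^4 + 611*ρ^6*k^5 + 1059*ρ^6*k^6 + 887*ρ^6*k^7 + 292*ρ^6*k^8 + 16*ρ^7*k^4 + 137*ρ^7*k^5 + 418*ρ^7*k^6 + 600*ρ^7*k^7 + 414*ρ^7*k^8 + 111*ρ^7*k^9 + 9*ρ^8*k^5 + 59*ρ^8*k^6 + 146*ρ^8*k^7 + 174*ρ^8*k^8 + 101*ρ^8*k^9 + 23*ρ^8*k^10 + 2*ρ^9*k^6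 + 10*ρ^9*k^7 + 20*ρ^9*k^8 + 20*ρ^9*k^9 + 10*ρ^9*k^10 + 2*ρ^9*k^11))) * GP2
  have hXeq : Tps ρ k p - Tfs ρ k π
      = (ρ^4 * k * (1-k) * (k*ρ+1)^2 * (4*k + 8*k^2 + 8*k^3 + 12*k^4 + 4*ρ + 20*ρ*k + 68*ρ*k^2 + 120*ρ*k^3 + 120*ρ*k^4 + 100*ρ*k^5 + 4*ρ^2 + 49*ρ^2*k + 196*ρ^2*k^2 + 457*ρ^2*k^3 + 667*ρ^2*k^4 + 608*ρ^2*k^5 + 323*ρ^2*k^6 + 1*ρ^3 + 32*ρ^3*k + 233*ρ^3*k^2 + 765*ρ^3*k^3 + 1489*ρ^3*k^4 + 1855*ρ^3*k^5 + 1423*ρ^3*k^6 + 514*ρ^3*k^7 + 6*ρ^4*k + 102*ρ^4*k^2 + 558*ρ^4*k^3 + 1555*ρ^4*k^4 + 2622*ρ^4*k^5 + 2771*ρ^4*k^6 + 1692*ρ^4*k^7 + 430*ρ^4*k^8 + 14*ρ^5*k^2 + 166*ρ^5*k^3 + 738*ρ^5*k^4 + 1768*ρ^5*k^5 + 2555*ρ^5*k^6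 + 2225*ρ^5*k^7 + 1045*ρ^5*k^8 + 193*ρ^5*k^9 + 16*ρ^6*k^3 + 146*ρ^6*k^4 + 543*ρ^6*k^5 + 1106*ρ^6*k^6 + 1328*ρ^6*k^7 + 920*ρ^6*k^8 + 329*ρ^6*k^9 + 44*ρ^6*k^10 + 9*ρ^7*k^4 + 66*ρ^7*k^5 + 205*ρ^7*k^6 + 344*ρ^7*k^7 + 331*ρ^7*k^8 + 178*ρ^7*k^9 + 47*ρ^7*k^10 + 4*ρ^7*k^11 + 2*ρ^8*k^5 + 12*ρ^8*k^6 + 30*ρ^8*k^7 + 40*ρ^8*k^8 + 30*ρ^8*k^9 + 12*ρ^8*k^10 + 2*ρ^8*k^11)) / ((2*ρ*k^2 + 6*ρ*k^3 + 4*ρ^2*k + 15*ρ^2*k^2 + 42*ρ^2*k^3 + 59*ρ^2*k^4 + 4*ρ^3*k + 47*ρ^3*k^2 + 148*ρ^3*k^3 + 261*ρ^3*k^4 + 220*ρ^3*k^5 + 1*ρ^4*k + 32*ρ^4*k^2 + 215*ρ^4*k^3 + 552*ρ^4*k^4 + 726*ρ^4*k^5 + 418*ρ^4*k^6 + 6*ρ^5*k^2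 + 101*ρ^5*k^3 + 491*ρ^5*k^4 + 1032*ρ^5*k^5 + 1069*ρ^5*k^6 + 453*ρ^5*k^7 + 14*ρ^6*k^3 + 161*ρ^6*k^4 + 611*ρ^6*k^5 + 1059*ρ^6*k^6 + 887*ρ^6*k^7 + 292*ρ^6*k^8 + 16*ρ^7*k^4 + 137*ρ^7*k^5 + 418*ρ^7*k^6 + 600*ρ^7*k^7 + 414*ρ^7*k^8 + 111*ρ^7*k^9 + 9*ρ^8*k^5 + 59*ρ^8*k^6 + 146*ρ^8*k^7 + 174*ρ^8*k^8 + 101*ρ^8*k^9 + 23*ρ^8*k^10 + 2*ρ^9*k^6 + 10*ρ^9*k^7 + 20*ρ^9*k^8 + 20*ρ^9*k^9 + 10*ρ^9*k^10 + 2*ρ^9*k^11) * ((2*ρ*k + 2*ρ^2 + 7*ρ^2*k + 7*ρ^2*k^2 + 3*ρ^3 + 12*ρ^3*k + 19*ρ^3*k^2 + 7*ρ^3*k^3 + 1*ρ^4 + 9*ρ^4*k + 19*ρ^4*k^2 + 15*ρ^4*k^3 + 2*ρ^4*k^4 + 2*ρ^5*k + 8*ρ^5*k^2 + 10*ρ^5*k^3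 + 3*ρ^5*k^4 + 1*ρ^6*k^2 + 2*ρ^6*k^3 + 1*ρ^6*k^4))) := (eq_div_iff hD.ne').mpr key
  have hX : 0 < Tps ρ k p - Tfs ρ k π := hXeq ▸ div_pos hnum hD
  linarith
end
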